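/- arXiv:2601.09564 — 6 statements merged into one kernel-verified Lean document; each statement's English description precedes it below -/
import Mathlib

section
/- For every nonnegative real number τ, the Gaussian Mills ratio R(τ) = Q(τ)/φ(τ), where φ(τ) = (1/√(2π))·exp(−τ²/2) and Q(τ) = ∫_τ^∞ φ(x) dx, satisfies 2/(τ + √(τ² + 4)) ≤ R(τ) ≤ 2/(τ + √(τ² + 8/π)). -/
/-!
For `c > 0` put `B_c(τ) = 2 / (τ + √(τ² + c))` and `G_c = Q − B_c φ` (`millsBound`, `millsGap`),
which tends to `0` at infinity. From `Q' = −φ` and `φ' = −τφ` one gets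
`G_c'(τ) = φ(τ) B_c(τ) / (4√(τ² + c)) · (4 − c − (√(τ² + c) − τ)²)`.
For `c = 4` this is `≤ 0`, so `G_4` decreases to `0`, i.e. `B_4 ≤ R`. For `2 ≤ c < 4` the last
factor is `≤ 0` exactly when `τ√(4 − c) ≤ c − 2`, so on `[0, ∞)` the gap `G_c` first decreases and
then increases to `0`; it is therefore `≤ 0` as soon as `G_c(0) = 1/2 − 2/√(2πc) ≤ 0`, and
`c = 8/π` is the value for which `G_c(0) = 0`.
-/

open MeasureTheory Real Set

/-- The standard Gaussian density `φ(x) = (1/√(2π))·exp(−x²/2)`. -/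
noncomputable def gaussPDF (x : ℝ) : ℝ := (Real.sqrt (2 * Real.pi))⁻¹ * Real.exp (-x ^ 2 / 2)

/-- The Gaussian Q-function `Q(τ) = ∫_τ^∞ φ(x) dx`. -/
noncomputable def gaussQ (τ : ℝ) : ℝ := ∫ x in Set.Ioi τ, gaussPDF x

/-- The Gaussian Mills ratio `R(τ) = Q(τ)/φ(τ)`. -/
noncomputable def millsR (τ : ℝ) : ℝ := gaussQ τ / gaussPDF τ

open Filter Topology

lemma gaussPDF_pos (x : ℝ) : 0 < gaussPDF x := by
  unfold gaussPDF; positivity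

lemma continuous_gaussPDF : Continuous gaussPDF := by
  unfold gaussPDF; fun_prop

lemma integrable_gaussPDF : Integrable gaussPDF := by
  have h := (integrable_exp_neg_mul_sq (b := 1 / 2) (by norm_num)).const_mul (√(2 * π))⁻¹
  refine h.congr (Eventually.of_forall fun x => ?_)
  simp only [gaussPDF]; ring_nf

lemma hasDerivAt_gaussPDF (x : ℝ) : HasDerivAt gaussPDF (-x * gaussPDF x) x := by
  have h : HasDerivAt (fun y : ℝ => -y ^ 2 / 2) (-x) x := by
    simpa using ((hasDerivAt_pow 2 x).neg.div_const 2).congr_deriv (by ring : _ = -x)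
  show HasDerivAt (fun y => (√(2 * π))⁻¹ * exp (-y ^ 2 / 2)) _ x
  exact (h.exp.const_mul _).congr_deriv (by rw [gaussPDF]; ring)

lemma tendsto_gaussPDF_atTop : Tendsto gaussPDF atTop (𝓝 0) := by
  have h : Tendsto (fun x : ℝ => -x ^ 2 / 2) atTop atBot :=
    (tendsto_neg_atBot_iff.2 (tendsto_pow_atTop two_ne_zero)).atBot_div_const two_pos
  have h' := (tendsto_exp_atBot.comp h).const_mul (√(2 * π))⁻¹
  rwa [mul_zero] at h'

lemma gaussQ_zero : gaussQ 0 = 1 / 2 := by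
  have h : ∫ x in Ioi (0 : ℝ), exp (-x ^ 2 / 2) = √(2 * π) / 2 := by
    simpa [neg_div, div_eq_inv_mul, mul_comm] using integral_gaussian_Ioi (1 / 2)
  simp only [gaussQ, gaussPDF]
  rw [integral_const_mul, h]
  field_simp

lemma gaussQ_eq_half_sub_integral (τ : ℝ) : gaussQ τ = 1 / 2 - ∫ x in (0 : ℝ)..τ, gaussPDF x := by
  rw [← gaussQ_zero, ← intervalIntegral.integral_Ioi_sub_Ioi' integrable_gaussPDF.integrableOn
    integrable_gaussPDF.integrableOn, gaussQ, gaussQ, sub_sub_cancel]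

lemma hasDerivAt_gaussQ (τ : ℝ) : HasDerivAt gaussQ (-gaussPDF τ) τ := by
  rw [funext gaussQ_eq_half_sub_integral]
  exact (continuous_gaussPDF.integral_hasStrictDerivAt 0 τ).hasDerivAt.const_sub _

lemma tendsto_gaussQ_atTop : Tendsto gaussQ atTop (𝓝 0) := by
  have h := intervalIntegral_tendsto_integral_Ioi 0 integrable_gaussPDF.integrableOn tendsto_id
  rw [← gaussQ, gaussQ_zero] at h
  have h' := h.const_sub (1 / 2 : ℝ)
  rw [sub_self] at h'
  exact h'.congr fun τ => (gaussQ_eq_half_sub_integral τ).symm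

lemma nonneg_of_hasDerivAt_nonpos_of_tendsto_zero {f f' : ℝ → ℝ}
    (hf : ∀ x, HasDerivAt f (f' x) x) (hf' : ∀ x, f' x ≤ 0)
    (hlim : Tendsto f atTop (𝓝 0)) (x : ℝ) : 0 ≤ f x :=
  (antitone_of_hasDerivAt_nonpos hf hf').le_of_tendsto hlim x

lemma nonpos_of_hasDerivAt_of_tendsto_zero {f f' : ℝ → ℝ} {a b x : ℝ}
    (hf : ∀ x, HasDerivAt f (f' x) x) (hneg : ∀ x ∈ Ioo a b, f' x ≤ 0)
    (hpos : ∀ x ∈ Ioi b, 0 ≤ f' x) (ha : f a ≤ 0) (hlim : Tendsto f atTop (𝓝 0))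
    (hx : a ≤ x) : f x ≤ 0 := by
  have hcont : Continuous f := continuous_iff_continuousAt.2 fun x => (hf x).continuousAt
  rcases le_total x b with hxb | hbx
  · have hanti : AntitoneOn f (Icc a b) :=
      antitoneOn_of_hasDerivWithinAt_nonpos (convex_Icc a b) hcont.continuousOn
        (fun x _ => (hf x).hasDerivWithinAt) (by simpa using hneg)
    exact (hanti (left_mem_Icc.2 (hx.trans hxb)) ⟨hx, hxb⟩ hx).trans ha
  · have hmono : MonotoneOn f (Ici b) :=
      monotoneOn_of_hasDerivWithinAt_nonneg (convex_Ici b) hcont.continuousOn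
        (fun x _ => (hf x).hasDerivWithinAt) (by simpa using hpos)
    exact ge_of_tendsto hlim <| (eventually_ge_atTop x).mono fun y hy =>
      hmono hbx (hbx.trans hy) hy

noncomputable def millsBound (c τ : ℝ) : ℝ := 2 / (τ + √(τ ^ 2 + c))

noncomputable def millsGap (c τ : ℝ) : ℝ := gaussQ τ - millsBound c τ * gaussPDF τ

lemma millsBound_le_millsR_iff {c τ : ℝ} : millsBound c τ ≤ millsR τ ↔ 0 ≤ millsGap c τ := by
  rw [millsR, le_div_iff₀ (gaussPDF_pos τ), millsGap, sub_nonneg]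

lemma millsR_le_millsBound_iff {c τ : ℝ} : millsR τ ≤ millsBound c τ ↔ millsGap c τ ≤ 0 := by
  rw [millsR, div_le_iff₀ (gaussPDF_pos τ), millsGap, sub_nonpos]

lemma add_sqrt_sq_add_pos {c : ℝ} (hc : 0 < c) (τ : ℝ) : 0 < τ + √(τ ^ 2 + c) := by
  have h : |τ| < √(τ ^ 2 + c) := by
    rw [Real.lt_sqrt (abs_nonneg τ), sq_abs]; linarith
  linarith [neg_abs_le τ]

lemma millsBound_pos {c : ℝ} (hc : 0 < c) (τ : ℝ) : 0 < millsBound c τ :=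
  div_pos two_pos (add_sqrt_sq_add_pos hc τ)

lemma hasDerivAt_millsBound {c : ℝ} (hc : 0 < c) (τ : ℝ) :
    HasDerivAt (millsBound c) (-2 / (√(τ ^ 2 + c) * (τ + √(τ ^ 2 + c)))) τ := by
  have hS : 0 < √(τ ^ 2 + c) := Real.sqrt_pos.2 (by positivity)
  have hsqrt : HasDerivAt (fun y => √(y ^ 2 + c)) (τ / √(τ ^ 2 + c)) τ :=
    (((hasDerivAt_pow 2 τ).add_const c).sqrt (by positivity)).congr_deriv (by field_simp; ring)
  have hτS := add_sqrt_sq_add_pos hc τ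
  exact ((hasDerivAt_const τ (2 : ℝ)).div ((hasDerivAt_id' τ).add hsqrt) hτS.ne').congr_deriv
    (by simp only [Pi.add_apply]; field_simp; ring)

lemma hasDerivAt_millsGap {c : ℝ} (hc : 0 < c) (τ : ℝ) :
    HasDerivAt (millsGap c) (gaussPDF τ * millsBound c τ / (4 * √(τ ^ 2 + c)) *
      (4 - c - (√(τ ^ 2 + c) - τ) ^ 2)) τ := by
  have hS : 0 < √(τ ^ 2 + c) := Real.sqrt_pos.2 (by positivity)
  have hS2 : √(τ ^ 2 + c) ^ 2 = τ ^ 2 + c := Real.sq_sqrt (by positivity)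
  have hτS := add_sqrt_sq_add_pos hc τ
  refine ((hasDerivAt_gaussQ τ).sub ((hasDerivAt_millsBound hc τ).mul
    (hasDerivAt_gaussPDF τ))).congr_deriv ?_
  simp only [millsBound]
  field_simp
  linear_combination -2 * gaussPDF τ * hS2

lemma tendsto_millsGap_atTop (c : ℝ) : Tendsto (millsGap c) atTop (𝓝 0) := by
  have hden : Tendsto (fun τ => τ + √(τ ^ 2 + c)) atTop atTop :=
    tendsto_atTop_mono (fun τ => le_add_of_nonneg_right (Real.sqrt_nonneg _)) tendsto_id
  have hB : Tendsto (millsBound c) atTop (𝓝 0) := tendsto_const_nhds.div_atTop hden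
  have h := tendsto_gaussQ_atTop.sub (hB.mul tendsto_gaussPDF_atTop)
  rwa [mul_zero, sub_zero] at h

lemma gaussPDF_mul_millsBound_div_pos {c : ℝ} (hc : 0 < c) (τ : ℝ) :
    0 < gaussPDF τ * millsBound c τ / (4 * √(τ ^ 2 + c)) :=
  div_pos (mul_pos (gaussPDF_pos τ) (millsBound_pos hc τ)) (by positivity)

lemma four_sub_le_sqrt_sq_add_sub_sq {c τ : ℝ} (hc4 : c < 4)
    (h : τ ≤ (c - 2) / √(4 - c)) : 4 - c ≤ (√(τ ^ 2 + c) - τ) ^ 2 := by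
  have hd : 0 < √(4 - c) := Real.sqrt_pos.2 (by linarith)
  have hd2 : √(4 - c) ^ 2 = 4 - c := Real.sq_sqrt (by linarith)
  have hτd : τ * √(4 - c) ≤ c - 2 := (le_div_iff₀ hd).1 h
  have hle : τ + √(4 - c) ≤ √(τ ^ 2 + c) := Real.le_sqrt_of_sq_le (by nlinarith)
  rw [← hd2]
  exact pow_le_pow_left₀ hd.le (by linarith) 2

lemma sqrt_sq_add_sub_sq_le_four_sub {c τ : ℝ} (hc2 : 2 ≤ c) (hc4 : c < 4)
    (h : (c - 2) / √(4 - c) ≤ τ) : (√(τ ^ 2 + c) - τ) ^ 2 ≤ 4 - c := by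
  have hd : 0 < √(4 - c) := Real.sqrt_pos.2 (by linarith)
  have hd2 : √(4 - c) ^ 2 = 4 - c := Real.sq_sqrt (by linarith)
  have hτd : c - 2 ≤ τ * √(4 - c) := (div_le_iff₀ hd).1 h
  have hτ : 0 ≤ τ := (div_nonneg (by linarith) hd.le).trans h
  have hge : τ ≤ √(τ ^ 2 + c) := Real.le_sqrt_of_sq_le (by linarith)
  have hle : √(τ ^ 2 + c) ≤ τ + √(4 - c) := Real.sqrt_le_iff.2 ⟨by positivity, by nlinarith⟩
  rw [← hd2]
  exact pow_le_pow_left₀ (by linarith) (by linarith) 2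

lemma millsGap_eight_div_pi_zero : millsGap (8 / π) 0 = 0 := by
  have h : √(8 / π) * √(2 * π) = 4 := by
    rw [← Real.sqrt_mul (by positivity), show 8 / π * (2 * π) = 4 ^ 2 by field_simp; norm_num,
      Real.sqrt_sq (by norm_num)]
  rw [millsGap, millsBound, gaussQ_zero, gaussPDF]
  simp only [ne_eq, OfNat.ofNat_ne_zero, not_false_eq_true, zero_pow, zero_add, neg_zero,
    zero_div, exp_zero, mul_one]
  rw [← div_eq_mul_inv, div_div, h]
  norm_num

lemma millsBound_four_le_millsR (τ : ℝ) : millsBound 4 τ ≤ millsR τ :=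
  millsBound_le_millsR_iff.2 <| nonneg_of_hasDerivAt_nonpos_of_tendsto_zero
    (hasDerivAt_millsGap four_pos)
    (fun x => mul_nonpos_of_nonneg_of_nonpos (gaussPDF_mul_millsBound_div_pos four_pos x).le
      (by linarith [sq_nonneg (√(x ^ 2 + 4) - x)]))
    (tendsto_millsGap_atTop 4) τ

lemma millsR_le_millsBound_eight_div_pi {τ : ℝ} (hτ : 0 ≤ τ) :
    millsR τ ≤ millsBound (8 / π) τ := by
  have hc : 0 < 8 / π := by positivity
  have hc2 : 2 ≤ 8 / π := by rw [le_div_iff₀ pi_pos]; linarith [pi_le_four]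
  have hc4 : 8 / π < 4 := by rw [div_lt_iff₀ pi_pos]; linarith [pi_gt_three]
  refine millsR_le_millsBound_iff.2 <| nonpos_of_hasDerivAt_of_tendsto_zero
    (b := (8 / π - 2) / √(4 - 8 / π)) (hasDerivAt_millsGap hc) (fun x hx => ?_)
    (fun x hx => ?_) millsGap_eight_div_pi_zero.le (tendsto_millsGap_atTop _) hτ
  · exact mul_nonpos_of_nonneg_of_nonpos (gaussPDF_mul_millsBound_div_pos hc x).le
      (sub_nonpos.2 (four_sub_le_sqrt_sq_add_sub_sq hc4 hx.2.le))
  · exact mul_nonneg (gaussPDF_mul_millsBound_div_pos hc x).le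
      (sub_nonneg.2 (sqrt_sq_add_sub_sq_le_four_sub hc2 hc4 hx.le))

/-- For every nonnegative real `τ`,
`2/(τ + √(τ² + 4)) ≤ R(τ) ≤ 2/(τ + √(τ² + 8/π))`. -/
theorem mills_ratio_bounds (τ : ℝ) (hτ : 0 ≤ τ) :
    2 / (τ + Real.sqrt (τ ^ 2 + 4)) ≤ millsR τ ∧
      millsR τ ≤ 2 / (τ + Real.sqrt (τ ^ 2 + 8 / Real.pi)) :=
  ⟨millsBound_four_le_millsR τ, millsR_le_millsBound_eight_div_pi hτ⟩
end

section
/- Let W, Q be σ-finite measures on the same space with W ≪ ρ, Q ≪ ρ for a σ-finite ρ, and suppose η(1) = ∫ min(dW/dρ, dQ/dρ) dρ < ∞. Define the likelihood ratio L = (dW̃/dQ), where W̃ is the Q-absolutely-continuous component of W (with L = ∞ where dQ/dρ = 0 and dW/dρ > 0). Then for all γ > 0, η(γ) = ∫_0^γ Q({L > t}) dt. -/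
open MeasureTheory Set ENNReal

/-- Let `W, Q` be σ-finite measures on the same space with `W ≪ ρ`, `Q ≪ ρ` for a
σ-finite `ρ`, and suppose `η(1) = ∫ min(dW/dρ, dQ/dρ) dρ < ∞`.  With the likelihood
ratio `L = dW̃/dQ` (where `W̃` is the `Q`-absolutely-continuous component of `W`,
and `L = ∞` where `dQ/dρ = 0` and `dW/dρ > 0`), one has for all `γ > 0`:
`η(γ) = ∫_0^γ Q({L > t}) dt`. -/
theorem entropy_spectrum_spectral_repr {Ω : Type*} [MeasurableSpace Ω]
    (W Q ρ : Measure Ω) [SigmaFinite W] [SigmaFinite Q] [SigmaFinite ρ]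
    (hW : W ≪ ρ) (hQ : Q ≪ ρ)
    (h1 : ∫⁻ x, min (W.rnDeriv ρ x) (Q.rnDeriv ρ x) ∂ρ ≠ ⊤)
    (L : Ω → ℝ≥0∞)
    (hL : L = fun x =>
      if Q.rnDeriv ρ x = 0 ∧ 0 < W.rnDeriv ρ x then (⊤ : ℝ≥0∞) else W.rnDeriv Q x) :
    ∀ γ : ℝ, 0 < γ →
      ∫⁻ x, min (W.rnDeriv ρ x) (ENNReal.ofReal γ * Q.rnDeriv ρ x) ∂ρ
        = ∫⁻ t in Set.Ioc (0 : ℝ) γ, Q {x | ENNReal.ofReal t < L x} := by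
  intro γ hγ
  set q : Ω → ℝ≥0∞ := Q.rnDeriv ρ with hq_def
  set w : Ω → ℝ≥0∞ := W.rnDeriv ρ with hw_def
  set g : Ω → ℝ≥0∞ := W.rnDeriv Q with hg_def
  set γ' : ℝ≥0∞ := ENNReal.ofReal γ with hγ'_def
  have hqm : Measurable q := Q.measurable_rnDeriv ρ
  have hwm : Measurable w := W.measurable_rnDeriv ρ
  have hgm : Measurable g := W.measurable_rnDeriv Q
  have hLmeas : Measurable L := by
    rw [hL]
    have h : {x | q x = 0 ∧ 0 < w x} = (q ⁻¹' {0}) ∩ (w ⁻¹' {0})ᶜ := by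
      ext x; simp [pos_iff_ne_zero]
    refine Measurable.ite ?_ measurable_const hgm
    rw [h]
    exact (hqm (measurableSet_singleton 0)).inter
      ((hwm (measurableSet_singleton 0)).compl)
  -- inner layer-cake computation
  have key : ∀ x : Ω, (∫⁻ t in Set.Ioc (0 : ℝ) γ,
      ({p : ℝ | ENNReal.ofReal p < L x}).indicator 1 t) = min γ' (L x) := by
    intro x
    have hs : MeasurableSet {p : ℝ | ENNReal.ofReal p < L x} :=
      measurableSet_lt ENNReal.measurable_ofReal measurable_const
    rw [lintegral_indicator_one hs, Measure.restrict_apply hs]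
    rcases eq_or_ne (L x) ⊤ with hℓ | hℓ
    · have : {p : ℝ | ENNReal.ofReal p < L x} ∩ Set.Ioc (0 : ℝ) γ = Set.Ioc (0 : ℝ) γ := by
        rw [Set.inter_eq_right]
        intro t _
        simp [hℓ, ENNReal.ofReal_lt_top]
      rw [this, Real.volume_Ioc, hℓ]
      simp [hγ'_def]
    · set r : ℝ := (L x).toReal with hr_def
      have hr0 : 0 ≤ r := ENNReal.toReal_nonneg
      have hℓr : ENNReal.ofReal r = L x := ENNReal.ofReal_toReal hℓ
      rcases le_or_gt r γ with hrγ | hγr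
      · have hset : {p : ℝ | ENNReal.ofReal p < L x} ∩ Set.Ioc (0 : ℝ) γ
            = Set.Ioo (0 : ℝ) r := by
          ext t
          simp only [Set.mem_inter_iff, Set.mem_setOf_eq, Set.mem_Ioc, Set.mem_Ioo]
          constructor
          · rintro ⟨h1', h2', h3'⟩
            exact ⟨h2', (ENNReal.ofReal_lt_iff_lt_toReal h2'.le hℓ).mp h1'⟩
          · rintro ⟨h1', h2'⟩
            exact ⟨(ENNReal.ofReal_lt_iff_lt_toReal h1'.le hℓ).mpr h2', h1',
              le_trans h2'.le hrγ⟩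
        rw [hset, Real.volume_Ioo, sub_zero, hℓr]
        rw [min_eq_right]
        rw [← hℓr]
        exact ENNReal.ofReal_le_ofReal hrγ
      · have hset : {p : ℝ | ENNReal.ofReal p < L x} ∩ Set.Ioc (0 : ℝ) γ
            = Set.Ioc (0 : ℝ) γ := by
          rw [Set.inter_eq_right]
          rintro t ⟨h1', h2'⟩
          exact (ENNReal.ofReal_lt_iff_lt_toReal h1'.le hℓ).mpr (lt_of_le_of_lt h2' hγr)
        rw [hset, Real.volume_Ioc, sub_zero, min_eq_left]
        rw [← hℓr]
        exact ENNReal.ofReal_le_ofReal hγr.le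
  -- rewrite the RHS via Tonelli
  have hprod : MeasurableSet {p : ℝ × Ω | ENNReal.ofReal p.1 < L p.2} :=
    measurableSet_lt (ENNReal.measurable_ofReal.comp measurable_fst)
      (hLmeas.comp measurable_snd)
  have hRHS : (∫⁻ t in Set.Ioc (0 : ℝ) γ, Q {x | ENNReal.ofReal t < L x})
      = ∫⁻ x, min γ' (L x) ∂Q := by
    have h1' : ∀ t : ℝ, Q {x | ENNReal.ofReal t < L x}
        = ∫⁻ x, ({x : Ω | ENNReal.ofReal t < L x}).indicator 1 x ∂Q := by
      intro t
      rw [lintegral_indicator_one (measurableSet_lt measurable_const hLmeas)]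
    calc (∫⁻ t in Set.Ioc (0 : ℝ) γ, Q {x | ENNReal.ofReal t < L x})
        = ∫⁻ t in Set.Ioc (0 : ℝ) γ,
            ∫⁻ x, ({x : Ω | ENNReal.ofReal t < L x}).indicator 1 x ∂Q := by
          exact lintegral_congr fun t => h1' t
      _ = ∫⁻ x, (∫⁻ t in Set.Ioc (0 : ℝ) γ,
            ({x' : Ω | ENNReal.ofReal t < L x'}).indicator 1 x) ∂Q := by
          refine lintegral_lintegral_swap ?_
          have : (Function.uncurry fun (t : ℝ) (x : Ω) =>
              ({x' : Ω | ENNReal.ofReal t < L x'}).indicator 1 x)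
              = ({p : ℝ × Ω | ENNReal.ofReal p.1 < L p.2}).indicator (1 : ℝ × Ω → ℝ≥0∞) := by
            ext p
            simp [Function.uncurry, Set.indicator_apply]
          rw [this]
          exact ((measurable_one (α := ℝ≥0∞)).indicator hprod).aemeasurable
      _ = ∫⁻ x, min γ' (L x) ∂Q := by
          refine lintegral_congr fun x => ?_
          rw [← key x]
          refine lintegral_congr fun t => ?_
          simp [Set.indicator_apply]
  rw [hRHS, ← MeasureTheory.lintegral_rnDeriv_mul hQ
    ((measurable_const.min hLmeas).aemeasurable)]
  -- now the pointwise identity, ρ-a.e.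
  have hadd : w =ᵐ[ρ] fun x => (W.singularPart Q).rnDeriv ρ x + g x * q x := by
    have h2' := Measure.rnDeriv_add' (W.singularPart Q) (Q.withDensity g) ρ
    have h3' : (Q.withDensity g).rnDeriv ρ =ᵐ[ρ] fun x => g x * q x :=
      Measure.rnDeriv_withDensity_left hgm.aemeasurable (W.rnDeriv_ne_top Q)
    have h4' : W = W.singularPart Q + Q.withDensity g :=
      (W.haveLebesgueDecomposition_add Q)
    filter_upwards [h2', h3'] with x hx2 hx3
    rw [hw_def]
    conv_lhs => rw [h4']
    rw [hx2, Pi.add_apply, hx3]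
  have hsing : ∀ᵐ x ∂ρ, (W.singularPart Q).rnDeriv ρ x ≠ 0 → q x = 0 := by
    have hs0 : (W.singularPart Q).rnDeriv ρ =ᵐ[Q] 0 :=
      Measure.rnDeriv_eq_zero_of_mutuallySingular (W.mutuallySingular_singularPart Q) hQ
    have hQnull : Q {x | (W.singularPart Q).rnDeriv ρ x ≠ 0} = 0 := by
      simpa [Filter.EventuallyEq, ae_iff] using hs0
    have hmeas : MeasurableSet {x | (W.singularPart Q).rnDeriv ρ x ≠ 0} :=
      (((W.singularPart Q).measurable_rnDeriv ρ) (measurableSet_singleton 0)).compl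
    have : ∫⁻ x in {x | (W.singularPart Q).rnDeriv ρ x ≠ 0}, q x ∂ρ = 0 := by
      rw [Measure.setLIntegral_rnDeriv hQ]
      exact hQnull
    have hq0 : ∀ᵐ x ∂(ρ.restrict {x | (W.singularPart Q).rnDeriv ρ x ≠ 0}), q x = 0 :=
      (lintegral_eq_zero_iff hqm).mp this
    exact (ae_restrict_iff' hmeas).mp hq0
  refine lintegral_congr_ae ?_
  filter_upwards [hadd, hsing] with x hx hxs
  rcases eq_or_ne (q x) 0 with hq0 | hq0
  · have hq0' : Q.rnDeriv ρ x = 0 := hq0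
    simp [hq0, hq0']
  · have hs0 : (W.singularPart Q).rnDeriv ρ x = 0 := by
      by_contra h
      exact hq0 (hxs h)
    have hwx : w x = g x * q x := by rw [hx, hs0, zero_add]
    have hLx : L x = g x := by
      rw [hL]
      simp only
      rw [if_neg]
      rintro ⟨h0, _⟩
      exact hq0 h0
    have hmin : min (g x * q x) (γ' * q x) = q x * min γ' (g x) := by
      rcases le_total γ' (g x) with hle | hle
      · rw [min_eq_left hle, min_eq_right (mul_le_mul_left hle _), mul_comm]
      · rw [min_eq_right hle, min_eq_left (mul_le_mul_left hle _), mul_comm]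
    rw [hwx, hLx]
    exact hmin
end

section
/- With the setup of the previous statement (σ-finite W, Q and η(1) < ∞), the function γ ↦ η(γ) on [0,∞) is nondecreasing, finite-valued, continuous, and concave, with left derivative Q({L ≥ γ}) and right derivative Q({L > γ}) at every γ > 0, and η(γ) → ‖W̃‖ (the total mass of the Q-absolutely-continuous part of W) as γ → ∞. -/
/-!
Writing `L = dW/dQ`, the chain rule `dW/dρ = L · dQ/dρ` (`Q`-a.e., and `min` vanishes where
`dQ/dρ = 0`) turns the spectrum into `η(γ) = ∫ min(L, γ) dQ`. Concavity is then pointwise, and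
for `0 < a < b`

  `(b - a) Q{L ≥ b} ≤ η(b) - η(a) ≤ (b - a) Q{L > a}`,

whose two bounds converge to the claimed one-sided derivatives by continuity of `Q` along
monotone families of sets. Finiteness of `η` everywhere comes from
`min(L, a) ≤ max(1, a) min(L, 1)`, and that of the tails `Q{L ≥ a}` from Markov's inequality
for `min(L, a)`. Continuity is dominated convergence and the limit at infinity monotone
convergence.
-/

open MeasureTheory Set ENNReal Filter Topology

variable {Ω : Type*} [MeasurableSpace Ω]

/-- The primitive entropy spectrum `η(γ) = ∫ min(dW/dρ, γ·dQ/dρ) dρ`. -/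
noncomputable def entSpec (W Q ρ : Measure Ω) (γ : ℝ) : ℝ≥0∞ :=
  ∫⁻ x, min (W.rnDeriv ρ x) (ENNReal.ofReal γ * Q.rnDeriv ρ x) ∂ρ

section MeasureContinuity

variable {ι : Type*} (μ : Measure Ω) [LinearOrder ι] [TopologicalSpace ι] [OrderTopology ι]
  [FirstCountableTopology ι]

theorem tendsto_measure_biUnion_gt [DenselyOrdered ι] {s : ι → Set Ω} {a : ι}
    (hm : ∀ i j, a < i → i ≤ j → s j ⊆ s i) :
    Tendsto (μ ∘ s) (𝓝[>] a) (𝓝 (μ (⋃ r > a, s r))) := by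
  have : (atBot : Filter (Ioi a)).IsCountablyGenerated := by
    rw [← comap_coe_Ioi_nhdsGT a]; infer_instance
  simp_rw [← map_coe_Ioi_atBot a, tendsto_map'_iff, ← mem_Ioi, biUnion_eq_iUnion]
  exact tendsto_measure_iUnion_atBot fun i j h ↦ hm i j i.2 h

theorem tendsto_measure_biInter_lt {s : ι → Set Ω} {a : ι}
    (hs : ∀ r < a, NullMeasurableSet (s r) μ) (hm : ∀ i j, i ≤ j → j < a → s j ⊆ s i)
    (hf : ∃ r < a, μ (s r) ≠ ∞) :
    Tendsto (μ ∘ s) (𝓝[<] a) (𝓝 (μ (⋂ r < a, s r))) :=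
  tendsto_measure_biInter_gt (ι := ιᵒᵈ) hs (fun i j hi hij ↦ hm j i hij hi) hf

end MeasureContinuity

theorem hasDerivWithinAt_of_slope_mem_Icc {φ lo hi : ℝ → ℝ} {s : Set ℝ} {x D : ℝ}
    (hx : x ∉ s) (hlo : Tendsto lo (𝓝[s] x) (𝓝 D)) (hhi : Tendsto hi (𝓝[s] x) (𝓝 D))
    (h : ∀ᶠ y in 𝓝[s] x, slope φ x y ∈ Icc (lo y) (hi y)) : HasDerivWithinAt φ D s x :=
  (hasDerivWithinAt_iff_tendsto_slope' hx).2 <|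
    tendsto_of_tendsto_of_tendsto_of_le_of_le' hlo hhi (h.mono fun _ hy ↦ hy.1)
      (h.mono fun _ hy ↦ hy.2)

section TruncatedLIntegral

variable (μ : Measure Ω) (f : Ω → ℝ≥0∞)

noncomputable def truncLIntegral (γ : ℝ) : ℝ≥0∞ :=
  ∫⁻ x, min (f x) (ENNReal.ofReal γ) ∂μ

theorem truncLIntegral_mono : Monotone (truncLIntegral μ f) := fun _ _ hab ↦
  lintegral_mono fun _ ↦ min_le_min le_rfl (ENNReal.ofReal_le_ofReal hab)

theorem truncLIntegral_le_ofReal_mul {γ : ℝ} (hγ : 1 ≤ γ) :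
    truncLIntegral μ f γ ≤ ENNReal.ofReal γ * truncLIntegral μ f 1 := by
  rw [truncLIntegral, truncLIntegral, ← lintegral_const_mul' _ _ ofReal_ne_top]
  refine lintegral_mono fun x ↦ ?_
  rw [ofReal_one, mul_min, mul_one]
  exact min_le_min (le_mul_of_one_le_left' (one_le_ofReal.2 hγ)) le_rfl

variable {μ f}

theorem truncLIntegral_ne_top (h1 : truncLIntegral μ f 1 ≠ ∞) (γ : ℝ) :
    truncLIntegral μ f γ ≠ ∞ := by
  rcases le_total γ 1 with hγ | hγ
  · exact ne_top_of_le_ne_top h1 (truncLIntegral_mono μ f hγ)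
  · exact ne_top_of_le_ne_top (mul_ne_top ofReal_ne_top h1)
      (truncLIntegral_le_ofReal_mul μ f hγ)

theorem measure_ofReal_le_ne_top (hf : AEMeasurable f μ) (h1 : truncLIntegral μ f 1 ≠ ∞)
    {t : ℝ} (ht : 0 < t) : μ {x | ENNReal.ofReal t ≤ f x} ≠ ∞ := by
  have markov := mul_meas_ge_le_lintegral₀ (f := fun x ↦ min (f x) (ENNReal.ofReal t))
    (hf.min aemeasurable_const) (ENNReal.ofReal t)
  simp only [le_min_iff, le_refl, and_true] at markov
  exact (lt_top_of_mul_ne_top_right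
    (ne_top_of_le_ne_top (truncLIntegral_ne_top h1 t) markov) (ofReal_pos.2 ht).ne').ne

theorem measure_ofReal_lt_ne_top (hf : AEMeasurable f μ) (h1 : truncLIntegral μ f 1 ≠ ∞)
    {t : ℝ} (ht : 0 < t) : μ {x | ENNReal.ofReal t < f x} ≠ ∞ :=
  ne_top_of_le_ne_top (measure_ofReal_le_ne_top hf h1 ht)
    (measure_mono fun _ hx ↦ le_of_lt (α := ℝ≥0∞) hx)

theorem truncLIntegral_add_le (hf : Measurable f) {a b : ℝ} (ha : 0 ≤ a) (hab : a ≤ b) :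
    truncLIntegral μ f a + ENNReal.ofReal (b - a) * μ {x | ENNReal.ofReal b ≤ f x}
      ≤ truncLIntegral μ f b := by
  have hs : MeasurableSet {x | ENNReal.ofReal b ≤ f x} := measurableSet_le measurable_const hf
  rw [← lintegral_indicator_const hs, truncLIntegral, truncLIntegral,
    ← lintegral_add_right _ (measurable_const.indicator hs)]
  refine lintegral_mono fun x ↦ ?_
  simp only [indicator, mem_ofPred_eq]
  split_ifs with hx
  · rw [min_eq_right hx, min_eq_right ((ofReal_le_ofReal hab).trans hx),
      ← ofReal_add ha (sub_nonneg.2 hab), add_sub_cancel]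
  · rw [add_zero]
    exact min_le_min le_rfl (ofReal_le_ofReal hab)

theorem truncLIntegral_le_add (hf : Measurable f) {a b : ℝ} (ha : 0 ≤ a) (hab : a ≤ b) :
    truncLIntegral μ f b
      ≤ truncLIntegral μ f a + ENNReal.ofReal (b - a) * μ {x | ENNReal.ofReal a < f x} := by
  have hs : MeasurableSet {x | ENNReal.ofReal a < f x} := measurableSet_lt measurable_const hf
  rw [← lintegral_indicator_const hs, truncLIntegral, truncLIntegral,
    ← lintegral_add_right _ (measurable_const.indicator hs)]
  refine lintegral_mono fun x ↦ ?_
  simp only [indicator, mem_ofPred_eq]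
  split_ifs with hx
  · rw [min_eq_right hx.le, ← ofReal_add ha (sub_nonneg.2 hab), add_sub_cancel]
    exact min_le_right _ _
  · rw [add_zero]
    have hx : f x ≤ ENNReal.ofReal a := not_lt.1 hx
    rw [min_eq_left hx, min_eq_left (hx.trans (ofReal_le_ofReal hab))]

theorem slope_truncLIntegral_mem_Icc (hf : Measurable f) (h1 : truncLIntegral μ f 1 ≠ ∞)
    {a b : ℝ} (ha : 0 < a) (hab : a < b) :
    slope (fun γ ↦ (truncLIntegral μ f γ).toReal) a b ∈
      Icc (μ {x | ENNReal.ofReal b ≤ f x}).toReal (μ {x | ENNReal.ofReal a < f x}).toReal := by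
  have hT := truncLIntegral_ne_top (μ := μ) (f := f) h1
  have hb := measure_ofReal_le_ne_top hf.aemeasurable h1 (ha.trans hab)
  have ha' := measure_ofReal_lt_ne_top hf.aemeasurable h1 ha
  have lower := toReal_mono (hT b) (truncLIntegral_add_le hf ha.le hab.le)
  have upper := toReal_mono (add_ne_top.2 ⟨hT a, mul_ne_top ofReal_ne_top ha'⟩)
    (truncLIntegral_le_add hf ha.le hab.le)
  rw [toReal_add (hT a) (mul_ne_top ofReal_ne_top hb), toReal_mul,
    toReal_ofReal (sub_nonneg.2 hab.le)] at lower
  rw [toReal_add (hT a) (mul_ne_top ofReal_ne_top ha'), toReal_mul,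
    toReal_ofReal (sub_nonneg.2 hab.le)] at upper
  rw [slope_def_field, mem_Icc, le_div_iff₀ (sub_pos.2 hab), div_le_iff₀ (sub_pos.2 hab)]
  constructor <;> linarith

theorem tendsto_measure_ofReal_lt_nhdsLT (hf : Measurable f) (h1 : truncLIntegral μ f 1 ≠ ∞)
    {γ : ℝ} (hγ : 0 < γ) :
    Tendsto (fun y ↦ μ {x | ENNReal.ofReal y < f x}) (𝓝[<] γ)
      (𝓝 (μ {x | ENNReal.ofReal γ ≤ f x})) := by
  have hinter : ⋂ r < γ, {x | ENNReal.ofReal r < f x} = {x | ENNReal.ofReal γ ≤ f x} := by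
    ext x
    simp only [mem_iInter, mem_ofPred_eq]
    refine ⟨fun h ↦ le_of_forall_lt fun c hc ↦ ?_,
      fun h r hr ↦ ((ofReal_lt_ofReal_iff hγ).2 hr).trans_le h⟩
    obtain ⟨r, -, hcr, hrγ⟩ := lt_iff_exists_real_btwn.1 hc
    exact hcr.trans (h r (ofReal_lt_ofReal_iff'.1 hrγ).1)
  rw [← hinter]
  exact tendsto_measure_biInter_lt μ
    (fun _ _ ↦ (measurableSet_lt measurable_const hf).nullMeasurableSet)
    (fun i j hij _ x hx ↦ (ofReal_le_ofReal hij).trans_lt hx)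
    ⟨γ / 2, by linarith, measure_ofReal_lt_ne_top hf.aemeasurable h1 (by linarith)⟩

theorem tendsto_measure_ofReal_le_nhdsGT {γ : ℝ} (hγ : 0 ≤ γ) :
    Tendsto (fun y ↦ μ {x | ENNReal.ofReal y ≤ f x}) (𝓝[>] γ)
      (𝓝 (μ {x | ENNReal.ofReal γ < f x})) := by
  have hunion : ⋃ r > γ, {x | ENNReal.ofReal r ≤ f x} = {x | ENNReal.ofReal γ < f x} := by
    ext x
    simp only [mem_iUnion, mem_ofPred_eq, exists_prop]
    refine ⟨fun ⟨r, hγr, hr⟩ ↦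
      ((ofReal_lt_ofReal_iff (hγ.trans_lt hγr)).2 hγr).trans_le hr, fun h ↦ ?_⟩
    obtain ⟨r, -, hγr, hr⟩ := lt_iff_exists_real_btwn.1 h
    exact ⟨r, (ofReal_lt_ofReal_iff'.1 hγr).1, hr.le⟩
  rw [← hunion]
  exact tendsto_measure_biUnion_gt μ fun i j _ hij x hx ↦ (ofReal_le_ofReal hij).trans hx

theorem hasDerivWithinAt_truncLIntegral_Iio (hf : Measurable f) (h1 : truncLIntegral μ f 1 ≠ ∞)
    {γ : ℝ} (hγ : 0 < γ) :
    HasDerivWithinAt (fun γ ↦ (truncLIntegral μ f γ).toReal)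
      (μ {x | ENNReal.ofReal γ ≤ f x}).toReal (Iio γ) γ := by
  refine hasDerivWithinAt_of_slope_mem_Icc self_notMem_Iio tendsto_const_nhds
    ((tendsto_toReal (measure_ofReal_le_ne_top hf.aemeasurable h1 hγ)).comp
      (tendsto_measure_ofReal_lt_nhdsLT hf h1 hγ)) ?_
  filter_upwards [Ioo_mem_nhdsLT hγ] with y hy
  rw [slope_comm]
  exact slope_truncLIntegral_mem_Icc hf h1 hy.1 hy.2

theorem hasDerivWithinAt_truncLIntegral_Ioi (hf : Measurable f) (h1 : truncLIntegral μ f 1 ≠ ∞)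
    {γ : ℝ} (hγ : 0 < γ) :
    HasDerivWithinAt (fun γ ↦ (truncLIntegral μ f γ).toReal)
      (μ {x | ENNReal.ofReal γ < f x}).toReal (Ioi γ) γ := by
  refine hasDerivWithinAt_of_slope_mem_Icc self_notMem_Ioi
    ((tendsto_toReal (measure_ofReal_lt_ne_top hf.aemeasurable h1 hγ)).comp
      (tendsto_measure_ofReal_le_nhdsGT hγ.le)) tendsto_const_nhds ?_
  filter_upwards [self_mem_nhdsWithin] with y hy
  exact slope_truncLIntegral_mem_Icc hf h1 hγ hy

theorem continuous_truncLIntegral (hf : Measurable f) (h1 : truncLIntegral μ f 1 ≠ ∞) :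
    Continuous (truncLIntegral μ f) := by
  refine continuous_iff_continuousAt.2 fun γ ↦ ?_
  refine tendsto_lintegral_filter_of_dominated_convergence
    (fun x ↦ min (f x) (ENNReal.ofReal (γ + 1)))
    (.of_forall fun _ ↦ hf.min measurable_const) ?_ (truncLIntegral_ne_top h1 (γ + 1))
    (.of_forall fun x ↦ (continuous_const.min ENNReal.continuous_ofReal).continuousAt)
  filter_upwards [Iio_mem_nhds (lt_add_one γ)] with y hy
  exact .of_forall fun x ↦ min_le_min le_rfl (ofReal_le_ofReal hy.le)

theorem ofReal_mul_min_add_ofReal_mul_min_le_min {a b x y : ℝ} (c : ℝ≥0∞) (ha : 0 ≤ a)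
    (hb : 0 ≤ b) (hab : a + b = 1) (hx : 0 ≤ x) (hy : 0 ≤ y) :
    ENNReal.ofReal a * min c (ENNReal.ofReal x) + ENNReal.ofReal b * min c (ENNReal.ofReal y)
      ≤ min c (ENNReal.ofReal (a * x + b * y)) := by
  refine le_min ?_ ?_
  · calc _ ≤ ENNReal.ofReal a * c + ENNReal.ofReal b * c := by gcongr <;> exact min_le_left _ _
      _ = c := by rw [← add_mul, ← ofReal_add ha hb, hab, ofReal_one, one_mul]
  · calc _ ≤ ENNReal.ofReal a * ENNReal.ofReal x + ENNReal.ofReal b * ENNReal.ofReal y := by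
          gcongr <;> exact min_le_right _ _
      _ = _ := by
          rw [← ofReal_mul ha, ← ofReal_mul hb, ← ofReal_add (by positivity) (by positivity)]

theorem concaveOn_truncLIntegral (h1 : truncLIntegral μ f 1 ≠ ∞) :
    ConcaveOn ℝ (Ici 0) fun γ ↦ (truncLIntegral μ f γ).toReal := by
  refine ⟨convex_Ici 0, fun x (hx : 0 ≤ x) y (hy : 0 ≤ y) a b ha hb hab ↦ ?_⟩
  have hT := truncLIntegral_ne_top (μ := μ) (f := f) h1
  have key : ENNReal.ofReal a * truncLIntegral μ f x + ENNReal.ofReal b * truncLIntegral μ f y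
      ≤ truncLIntegral μ f (a * x + b * y) := by
    simp only [truncLIntegral, ← lintegral_const_mul' _ _ ofReal_ne_top]
    exact (le_lintegral_add _ _).trans
      (lintegral_mono fun z ↦ ofReal_mul_min_add_ofReal_mul_min_le_min _ ha hb hab hx hy)
  have := toReal_mono (hT _) key
  rwa [toReal_add (mul_ne_top ofReal_ne_top (hT x)) (mul_ne_top ofReal_ne_top (hT y)),
    toReal_mul, toReal_mul, toReal_ofReal ha, toReal_ofReal hb] at this

theorem tendsto_truncLIntegral_atTop (hf : Measurable f) :
    Tendsto (truncLIntegral μ f) atTop (𝓝 (∫⁻ x, f x ∂μ)) := by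
  suffices ⨆ γ, truncLIntegral μ f γ = ∫⁻ x, f x ∂μ from
    this ▸ tendsto_atTop_iSup (truncLIntegral_mono μ f)
  refine le_antisymm (iSup_le fun γ ↦ lintegral_mono fun x ↦ min_le_left _ _) ?_
  have hsup (c : ℝ≥0∞) : ⨆ n : ℕ, min c (ENNReal.ofReal n) = c := by
    simp [ENNReal.ofReal_natCast, ← inf_iSup_eq, ENNReal.iSup_natCast]
  calc ∫⁻ x, f x ∂μ = ∫⁻ x, ⨆ n : ℕ, min (f x) (ENNReal.ofReal n) ∂μ := by
        simp only [hsup]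
    _ = ⨆ n : ℕ, truncLIntegral μ f n :=
        lintegral_iSup (fun n ↦ hf.min measurable_const)
          fun m n hmn x ↦ min_le_min le_rfl (ofReal_le_ofReal (Nat.cast_le.2 hmn))
    _ ≤ ⨆ γ, truncLIntegral μ f γ := iSup_comp_le _ _

end TruncatedLIntegral

theorem entSpec_eq_truncLIntegral (W Q ρ : Measure Ω)
    [SigmaFinite W] [SigmaFinite Q] [SigmaFinite ρ] (hQ : Q ≪ ρ) :
    entSpec W Q ρ = truncLIntegral Q (W.rnDeriv Q) := by
  funext γ
  rw [truncLIntegral, entSpec, ← lintegral_rnDeriv_mul hQ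
    ((Measure.measurable_rnDeriv W Q).min measurable_const).aemeasurable]
  refine lintegral_congr_ae ?_
  filter_upwards
    [Measure.ae_rnDeriv_ne_zero_imp_of_ae ρ (Measure.rnDeriv_mul_rnDeriv' (μ := W) hQ)] with x hx
  by_cases h0 : Q.rnDeriv ρ x = 0
  · simp [h0]
  · rw [← hx h0, Pi.mul_apply, min_mul_mul_right, mul_comm]

theorem entropy_spectrum_properties_general
    (W Q ρ : Measure Ω) [SigmaFinite W] [SigmaFinite Q] [SigmaFinite ρ]
    (hQ : Q ≪ ρ)
    (h1 : entSpec W Q ρ 1 ≠ ⊤) :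
    MonotoneOn (fun γ => (entSpec W Q ρ γ).toReal) (Set.Ici 0) ∧
    (∀ γ : ℝ, 0 ≤ γ → entSpec W Q ρ γ ≠ ⊤) ∧
    ContinuousOn (fun γ => (entSpec W Q ρ γ).toReal) (Set.Ici 0) ∧
    ConcaveOn ℝ (Set.Ici 0) (fun γ => (entSpec W Q ρ γ).toReal) ∧
    (∀ γ : ℝ, 0 < γ →
      HasDerivWithinAt (fun γ => (entSpec W Q ρ γ).toReal)
        ((Q {x | ENNReal.ofReal γ ≤ W.rnDeriv Q x}).toReal) (Set.Iio γ) γ) ∧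
    (∀ γ : ℝ, 0 < γ →
      HasDerivWithinAt (fun γ => (entSpec W Q ρ γ).toReal)
        ((Q {x | ENNReal.ofReal γ < W.rnDeriv Q x}).toReal) (Set.Ioi γ) γ) ∧
    Tendsto (fun γ => entSpec W Q ρ γ) atTop
      (𝓝 (Q.withDensity (W.rnDeriv Q) Set.univ)) := by
  have hL : Measurable (W.rnDeriv Q) := Measure.measurable_rnDeriv W Q
  rw [entSpec_eq_truncLIntegral W Q ρ hQ] at h1 ⊢
  have hT := truncLIntegral_ne_top h1
  refine ⟨fun a _ b _ hab ↦ toReal_mono (hT b) (truncLIntegral_mono _ _ hab),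
    fun γ _ ↦ hT γ,
    (continuousOn_toReal.comp_continuous (continuous_truncLIntegral hL h1) hT).continuousOn,
    concaveOn_truncLIntegral h1,
    fun γ hγ ↦ hasDerivWithinAt_truncLIntegral_Iio hL h1 hγ,
    fun γ hγ ↦ hasDerivWithinAt_truncLIntegral_Ioi hL h1 hγ, ?_⟩
  rw [withDensity_apply _ MeasurableSet.univ, setLIntegral_univ]
  exact tendsto_truncLIntegral_atTop hL

/-- Under `η(1) < ∞`, the entropy spectrum `γ ↦ η(γ)` on `[0,∞)` is nondecreasing,
finite-valued, continuous and concave, has left derivative `Q({L ≥ γ})` and right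
derivative `Q({L > γ})` at every `γ > 0` (where `L = dW̃/dQ` is the likelihood ratio),
and `η(γ) → ‖W̃‖` as `γ → ∞`, where `W̃` is the `Q`-absolutely-continuous component
of `W`. -/
theorem entropy_spectrum_properties
    (W Q ρ : Measure Ω) [SigmaFinite W] [SigmaFinite Q] [SigmaFinite ρ]
    (hW : W ≪ ρ) (hQ : Q ≪ ρ)
    (h1 : entSpec W Q ρ 1 ≠ ⊤) :
    MonotoneOn (fun γ => (entSpec W Q ρ γ).toReal) (Set.Ici 0) ∧
    (∀ γ : ℝ, 0 ≤ γ → entSpec W Q ρ γ ≠ ⊤) ∧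
    ContinuousOn (fun γ => (entSpec W Q ρ γ).toReal) (Set.Ici 0) ∧
    ConcaveOn ℝ (Set.Ici 0) (fun γ => (entSpec W Q ρ γ).toReal) ∧
    (∀ γ : ℝ, 0 < γ →
      HasDerivWithinAt (fun γ => (entSpec W Q ρ γ).toReal)
        ((Q {x | ENNReal.ofReal γ ≤ W.rnDeriv Q x}).toReal) (Set.Iio γ) γ) ∧
    (∀ γ : ℝ, 0 < γ →
      HasDerivWithinAt (fun γ => (entSpec W Q ρ γ).toReal)
        ((Q {x | ENNReal.ofReal γ < W.rnDeriv Q x}).toReal) (Set.Ioi γ) γ) ∧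
    Tendsto (fun γ => entSpec W Q ρ γ) atTop
      (𝓝 (Q.withDensity (W.rnDeriv Q) Set.univ)) :=
  entropy_spectrum_properties_general W Q ρ hQ h1
end

section
/- Let W, Q be σ-finite measures ≪ ρ with ∫ min(dW/dρ, dQ/dρ) dρ < ∞, and define β(ε) = inf{∫(1 − T) dQ : T measurable with values in [0,1], ∫ T dW ≤ ε} and η(γ) = ∫ min(dQ/dρ, γ·dW/dρ) dρ. Then β(ε) = sup_{γ ≥ 0} (η(γ) − γ·ε) for all real ε; in particular β is convex, nonincreasing, and lower semicontinuous as a supremum of affine functions. -/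
/-!
Write `w = dW/dρ` and `q = dQ/dρ`. Weak duality is pointwise: for `0 ≤ T ≤ 1`,
`min(q, γ w) ≤ (1 - T) q + T γ w`, and integrating against `ρ` gives
`η(γ) ≤ ∫ (1 - T) dQ + γ ∫ T dW`, with equality for Neyman–Pearson tests (`T = 1` where
`γ w < q`, `T = 0` where `q < γ w`). For strong duality let `γ₀` be the least `γ` whose region
`{γ w < q}` has `W`-mass at most `ε`. Continuity of `W` from below and from above (the regions
have finite `W`-mass for `γ > 0` because `∫ min(w, q) dρ < ∞`) shows that randomizing on the
boundary `{γ₀ w = q}` yields a Neyman–Pearson test of level exactly `ε`; for `ε = 0` the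
multiplier can be `γ₀ = ∞`, reached as the limit of `η(n)`. Convexity and lower
semicontinuity hold for any supremum of affine functions.
-/

open MeasureTheory Set ENNReal Topology

variable {Ω : Type*} [MeasurableSpace Ω]

/-- `β(ε)` as an extended-real-valued function of a real Type I error bound `ε`:
the infimum of `∫ (1 − T) dQ` over measurable `T : Ω → [0,1]` with `∫ T dW ≤ ε`
(for `ε < 0` no test qualifies and `β(ε) = ⊤`). -/
noncomputable def betaNPE (Q W : Measure Ω) (ε : ℝ) : EReal :=
  ⨅ (T : Ω → ℝ) (_ : Measurable T) (_ : ∀ x, T x ∈ Set.Icc (0 : ℝ) 1)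
    (_ : ((∫⁻ x, ENNReal.ofReal (T x) ∂W : ℝ≥0∞) : EReal) ≤ (ε : EReal)),
    ((∫⁻ x, ENNReal.ofReal (1 - T x) ∂Q : ℝ≥0∞) : EReal)

/-- The primitive entropy spectrum of `Q` relative to `W`:
`η(γ) = ∫ min(dQ/dρ, γ·dW/dρ) dρ`. -/
noncomputable def entSpecQW (Q W ρ : Measure Ω) (γ : ℝ) : ℝ≥0∞ :=
  ∫⁻ x, min (Q.rnDeriv ρ x) (ENNReal.ofReal γ * W.rnDeriv ρ x) ∂ρ

open Filter

lemma EReal.coe_ennreal_ofReal_of_nonneg {x : ℝ} (hx : 0 ≤ x) :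
    ((ENNReal.ofReal x : ℝ≥0∞) : EReal) = x := by
  rw [EReal.coe_ennreal_ofReal, max_eq_left hx]

lemma EReal.coe_ennreal_le_coe_iff_le_ofReal {x : ℝ≥0∞} {y : ℝ} (hy : 0 ≤ y) :
    (x : EReal) ≤ y ↔ x ≤ ENNReal.ofReal y := by
  rw [← EReal.coe_ennreal_ofReal_of_nonneg hy, EReal.coe_ennreal_le_coe_ennreal_iff]

lemma ENNReal.ofReal_one_sub_add_ofReal {t : ℝ} (ht : t ∈ Icc (0 : ℝ) 1) :
    ENNReal.ofReal (1 - t) + ENNReal.ofReal t = 1 := by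
  rw [← ENNReal.ofReal_add (sub_nonneg.2 ht.2) ht.1, sub_add_cancel, ENNReal.ofReal_one]

lemma ENNReal.min_le_ofReal_one_sub_mul_add {a b : ℝ≥0∞} {t : ℝ} (ht : t ∈ Icc (0 : ℝ) 1) :
    min a b ≤ ENNReal.ofReal (1 - t) * a + ENNReal.ofReal t * b :=
  calc min a b = (ENNReal.ofReal (1 - t) + ENNReal.ofReal t) * min a b := by
        rw [ENNReal.ofReal_one_sub_add_ofReal ht, one_mul]
    _ ≤ _ := by rw [add_mul]; gcongr <;> simp

lemma ENNReal.min_eq_ofReal_one_sub_mul_add {a b : ℝ≥0∞} {t : ℝ} (ht : t ∈ Icc (0 : ℝ) 1)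
    (hpos : 0 < t → b ≤ a) (hlt : t < 1 → a ≤ b) :
    min a b = ENNReal.ofReal (1 - t) * a + ENNReal.ofReal t * b := by
  rcases ht.1.eq_or_lt with rfl | ht0
  · simp [hlt one_pos]
  rcases ht.2.eq_or_lt with rfl | ht1
  · simp [hpos one_pos]
  obtain rfl := le_antisymm (hlt ht1) (hpos ht0)
  rw [min_self, ← add_mul, ENNReal.ofReal_one_sub_add_ofReal ht, one_mul]

lemma ENNReal.exists_add_ofReal_mul_eq {a b ε : ℝ≥0∞} (ha : a ≤ ε) (hb : ε ≤ a + b)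
    (hb_top : b ≠ ∞) : ∃ c ∈ Icc (0 : ℝ) 1, a + ENNReal.ofReal c * b = ε := by
  rcases eq_or_ne b 0 with rfl | hb0
  · exact ⟨0, by simp, by simpa using le_antisymm ha (by simpa using hb)⟩
  have hc : (ε - a) / b ≤ 1 := ENNReal.div_le_of_le_mul (by rwa [one_mul, tsub_le_iff_left])
  refine ⟨((ε - a) / b).toReal, ⟨ENNReal.toReal_nonneg, ?_⟩, ?_⟩
  · simpa using ENNReal.toReal_mono ENNReal.one_ne_top hc
  · rw [ENNReal.ofReal_toReal (ne_top_of_le_ne_top ENNReal.one_ne_top hc),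
      ENNReal.div_mul_cancel hb0 hb_top, add_tsub_cancel_of_le ha]

lemma betaNPE_le {Q W : Measure Ω} {ε : ℝ} {T : Ω → ℝ} (hT : Measurable T)
    (hT01 : ∀ x, T x ∈ Icc (0 : ℝ) 1)
    (hlevel : ((∫⁻ x, ENNReal.ofReal (T x) ∂W : ℝ≥0∞) : EReal) ≤ ε) :
    betaNPE Q W ε ≤ ((∫⁻ x, ENNReal.ofReal (1 - T x) ∂Q : ℝ≥0∞) : EReal) :=
  iInf₂_le_of_le T hT (iInf₂_le hT01 hlevel)

lemma betaNPE_of_neg {Q W : Measure Ω} {ε : ℝ} (hε : ε < 0) : betaNPE Q W ε = ⊤ :=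
  eq_top_iff.2 <| le_iInf₂ fun _ _ => le_iInf₂ fun _ hlevel =>
    absurd (EReal.coe_nonneg.1 ((EReal.coe_ennreal_nonneg _).trans hlevel)) hε.not_ge

lemma betaNPE_antitone (Q W : Measure Ω) : Antitone (betaNPE Q W) := fun _ _ hab =>
  le_iInf₂ fun _ hT => le_iInf₂ fun hT01 hlevel =>
    betaNPE_le hT hT01 (hlevel.trans (EReal.coe_le_coe_iff.2 hab))

noncomputable def dualTransform (c : ℝ → ℝ≥0∞) (ε : ℝ) : EReal :=
  ⨆ (γ : ℝ) (_ : 0 ≤ γ), (c γ : EReal) - ((γ * ε : ℝ) : EReal)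

section DualTransform

variable {c : ℝ → ℝ≥0∞}

lemma dualTransform_of_neg {ε : ℝ} (hε : ε < 0) : dualTransform c ε = ⊤ := by
  refine EReal.eq_top_iff_forall_lt _ |>.2 fun y => ?_
  obtain ⟨γ, hγ⟩ := exists_gt (y / -ε)
  have hγ0 : 0 ≤ max γ 0 := le_max_right _ _
  refine lt_of_lt_of_le ?_ (le_iSup₂_of_le (max γ 0) hγ0
    (EReal.sub_le_sub (EReal.coe_ennreal_nonneg _) le_rfl))
  rw [zero_sub, ← EReal.coe_neg, EReal.coe_lt_coe_iff]
  have := (div_lt_iff₀ (neg_pos.2 hε)).1 (hγ.trans_le (le_max_left _ 0))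
  linarith

lemma coe_sub_coe_mul_eq_coe_toReal_sub {γ ε : ℝ} (hc : c γ ≠ ∞) :
    (c γ : EReal) - ((γ * ε : ℝ) : EReal) = (((c γ).toReal - γ * ε : ℝ) : EReal) := by
  rw [EReal.coe_sub, ← EReal.coe_ennreal_ofReal_of_nonneg ENNReal.toReal_nonneg,
    ENNReal.ofReal_toReal hc]

lemma lowerSemicontinuous_dualTransform (hc : ∀ γ, c γ ≠ ∞) :
    LowerSemicontinuous (dualTransform c) := by
  refine lowerSemicontinuous_iSup fun γ => lowerSemicontinuous_iSup fun _ => ?_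
  simp only [coe_sub_coe_mul_eq_coe_toReal_sub (hc γ)]
  exact (continuous_coe_real_ereal.comp (by fun_prop)).lowerSemicontinuous

lemma dualTransform_convex (hc : ∀ γ, c γ ≠ ∞) {a b t : ℝ} (ht0 : 0 ≤ t) (ht1 : t ≤ 1) :
    dualTransform c (t * a + (1 - t) * b)
      ≤ (t : EReal) * dualTransform c a + ((1 - t : ℝ) : EReal) * dualTransform c b := by
  refine iSup₂_le fun γ hγ => ?_
  have hterm : ∀ ε, (((c γ).toReal - γ * ε : ℝ) : EReal) ≤ dualTransform c ε := fun ε =>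
    le_iSup₂_of_le γ hγ (coe_sub_coe_mul_eq_coe_toReal_sub (hc γ)).ge
  rw [coe_sub_coe_mul_eq_coe_toReal_sub (hc γ)]
  calc (((c γ).toReal - γ * (t * a + (1 - t) * b) : ℝ) : EReal)
      = (t : EReal) * (((c γ).toReal - γ * a : ℝ) : EReal)
        + ((1 - t : ℝ) : EReal) * (((c γ).toReal - γ * b : ℝ) : EReal) := by
        rw [← EReal.coe_mul, ← EReal.coe_mul, ← EReal.coe_add]; ring_nf
    _ ≤ _ := by
        gcongr
        exacts [hterm a, hterm b]

end DualTransform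

section Tests

variable {α : Type*}

def IsNeymanPearsonTest (w q : α → ℝ≥0∞) (γ : ℝ≥0∞) (T : α → ℝ) : Prop :=
  ∀ x, (0 < T x → γ * w x ≤ q x) ∧ (T x < 1 → q x ≤ γ * w x)

open Classical in
noncomputable def randomizedTest (A B : Set α) (c : ℝ) : α → ℝ :=
  A.piecewise 1 (B.indicator fun _ => c)

-- the region where the likelihood ratio `q / w` exceeds `γ`, written without division
def lrSuperlevelSet (w q : α → ℝ≥0∞) (γ : ℝ≥0∞) : Set α := {x | γ * w x < q x}

variable {A B : Set α} {c : ℝ} {w q : α → ℝ≥0∞}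

lemma randomizedTest_mem_Icc (hc : c ∈ Icc (0 : ℝ) 1) (x : α) :
    randomizedTest A B c x ∈ Icc (0 : ℝ) 1 := by
  by_cases hxA : x ∈ A
  · simp [randomizedTest, hxA]
  · by_cases hxB : x ∈ B <;> simp [randomizedTest, hxA, hxB, hc.1, hc.2]

lemma lrSuperlevelSet_antitone : Antitone (lrSuperlevelSet w q) := fun _ _ h _ hx =>
  lt_of_le_of_lt (mul_le_mul_of_nonneg_right h zero_le) hx

lemma lrSuperlevelSet_top_subset : lrSuperlevelSet w q ∞ ⊆ {x | w x = 0} := fun x hx => by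
  by_contra h
  exact not_top_lt (lt_of_eq_of_lt (ENNReal.top_mul h).symm hx)

lemma lrSuperlevelSet_subset_iUnion (hw_fin : ∀ x, w x ≠ ∞) {γ : ℝ≥0∞} {t : ℕ → ℝ≥0∞}
    (ht : Tendsto t atTop (𝓝 γ)) :
    lrSuperlevelSet w q γ ⊆ ⋃ n, lrSuperlevelSet w q (t n) := fun x hx =>
  mem_iUnion.2
    ((((ENNReal.continuous_mul_const (hw_fin x)).tendsto γ).comp ht).eventually_lt_const hx).exists

lemma mul_le_of_forall_mem_lrSuperlevelSet {x : α} (hwx : w x ≠ ∞) {γ : ℝ≥0∞}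
    {θ : ℕ → ℝ≥0∞} (hθ : Tendsto θ atTop (𝓝 γ)) (hx : ∀ n, x ∈ lrSuperlevelSet w q (θ n)) :
    γ * w x ≤ q x :=
  le_of_tendsto' (((ENNReal.continuous_mul_const hwx).tendsto γ).comp hθ) fun n => (hx n).le

lemma isNeymanPearsonTest_randomizedTest {γ : ℝ≥0∞} (c : ℝ) (hB : ∀ x ∈ B, γ * w x ≤ q x) :
    IsNeymanPearsonTest w q γ (randomizedTest (lrSuperlevelSet w q γ) B c) := fun x => by
  by_cases hxA : x ∈ lrSuperlevelSet w q γ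
  · exact ⟨fun _ => le_of_lt hxA, by simp [randomizedTest, hxA]⟩
  refine ⟨fun hpos => hB x ?_, fun _ => not_lt.1 hxA⟩
  by_contra hxB
  simp [randomizedTest, hxA, hxB] at hpos

end Tests

lemma measurable_randomizedTest {A B : Set Ω} {c : ℝ} (hA : MeasurableSet A)
    (hB : MeasurableSet B) : Measurable (randomizedTest A B c) :=
  measurable_const.piecewise hA (measurable_const.indicator hB)

lemma lintegral_ofReal_randomizedTest {A B : Set Ω} {c : ℝ} (hA : MeasurableSet A)
    (hB : MeasurableSet B) (μ : Measure Ω) :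
    ∫⁻ x, ENNReal.ofReal (randomizedTest A B c x) ∂μ = μ A + ENNReal.ofReal c * μ (B \ A) := by
  have h : ∀ x, ENNReal.ofReal (randomizedTest A B c x)
      = A.indicator (fun _ => 1) x + (B \ A).indicator (fun _ => ENNReal.ofReal c) x := fun x => by
    by_cases hxA : x ∈ A
    · simp [randomizedTest, hxA]
    · by_cases hxB : x ∈ B <;> simp [randomizedTest, hxA, hxB]
  simp_rw [h]
  rw [lintegral_add_left (measurable_const.indicator hA), lintegral_indicator_const hA,
    lintegral_indicator_const (hB.diff hA), one_mul]

section Densities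

variable {ρ : Measure Ω} {w q : Ω → ℝ≥0∞}

lemma lintegral_one_sub_add_mul_lintegral (hw : Measurable w) (hq : Measurable q)
    {T : Ω → ℝ} (hT : Measurable T) (γ : ℝ≥0∞) :
    ∫⁻ x, ENNReal.ofReal (1 - T x) ∂ρ.withDensity q
        + γ * ∫⁻ x, ENNReal.ofReal (T x) ∂ρ.withDensity w
      = ∫⁻ x, (ENNReal.ofReal (1 - T x) * q x + ENNReal.ofReal (T x) * (γ * w x)) ∂ρ := by
  rw [lintegral_withDensity_eq_lintegral_mul _ hq (by fun_prop),
    lintegral_withDensity_eq_lintegral_mul _ hw (by fun_prop),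
    ← lintegral_const_mul _ (by fun_prop), ← lintegral_add_left (by fun_prop)]
  congr with x
  simp only [Pi.mul_apply]
  ring

lemma lintegral_min_le_lintegral_one_sub_add (hw : Measurable w) (hq : Measurable q)
    {T : Ω → ℝ} (hT : Measurable T) (hT01 : ∀ x, T x ∈ Icc (0 : ℝ) 1) (γ : ℝ≥0∞) :
    ∫⁻ x, min (q x) (γ * w x) ∂ρ
      ≤ ∫⁻ x, ENNReal.ofReal (1 - T x) ∂ρ.withDensity q
        + γ * ∫⁻ x, ENNReal.ofReal (T x) ∂ρ.withDensity w := by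
  rw [lintegral_one_sub_add_mul_lintegral hw hq hT]
  exact lintegral_mono fun x => ENNReal.min_le_ofReal_one_sub_mul_add (hT01 x)

lemma IsNeymanPearsonTest.lintegral_min_eq {γ : ℝ≥0∞} {T : Ω → ℝ}
    (hNP : IsNeymanPearsonTest w q γ T) (hw : Measurable w) (hq : Measurable q)
    (hT : Measurable T) (hT01 : ∀ x, T x ∈ Icc (0 : ℝ) 1) :
    ∫⁻ x, min (q x) (γ * w x) ∂ρ
      = ∫⁻ x, ENNReal.ofReal (1 - T x) ∂ρ.withDensity q
        + γ * ∫⁻ x, ENNReal.ofReal (T x) ∂ρ.withDensity w := by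
  rw [lintegral_one_sub_add_mul_lintegral hw hq hT]
  exact lintegral_congr fun x =>
    ENNReal.min_eq_ofReal_one_sub_mul_add (hT01 x) (hNP x).1 (hNP x).2

lemma lintegral_min_ne_top (hfin : ∫⁻ x, min (w x) (q x) ∂ρ ≠ ∞) {γ : ℝ≥0∞} (hγ : γ ≠ ∞) :
    ∫⁻ x, min (q x) (γ * w x) ∂ρ ≠ ∞ := by
  have hle : ∀ x, min (q x) (γ * w x) ≤ max 1 γ * min (w x) (q x) := fun x => by
    rw [min_comm (w x), ← min_mul_mul_left]
    gcongr
    exacts [le_mul_of_one_le_left' (le_max_left _ _), le_max_right _ _]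
  refine ne_top_of_le_ne_top ?_ (lintegral_mono hle)
  rw [lintegral_const_mul' _ _ (max_ne_top ENNReal.one_ne_top hγ)]
  exact ENNReal.mul_ne_top (max_ne_top ENNReal.one_ne_top hγ) hfin

lemma lintegral_min_top_mul_eq_iSup (hw : Measurable w) (hq : Measurable q) :
    ∫⁻ x, min (q x) (∞ * w x) ∂ρ = ⨆ n : ℕ, ∫⁻ x, min (q x) (n * w x) ∂ρ := by
  rw [← lintegral_iSup (fun n => by fun_prop) fun n m hnm x => by dsimp only; gcongr]
  congr with x
  rw [← ENNReal.iSup_natCast, ENNReal.iSup_mul]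
  exact inf_iSup_eq _ _

lemma withDensity_setOf_eq_zero (hw : Measurable w) : ρ.withDensity w {x | w x = 0} = 0 := by
  rw [withDensity_apply_eq_zero' hw.aemeasurable]
  exact measure_mono_null (fun x hx => absurd hx.2 hx.1) measure_empty

end Densities

noncomputable def lrQuantile (μ : Measure Ω) (w q : Ω → ℝ≥0∞) (ε : ℝ≥0∞) : ℝ≥0∞ :=
  sInf {γ | μ (lrSuperlevelSet w q γ) ≤ ε}

section Quantile

variable {ρ : Measure Ω} {w q : Ω → ℝ≥0∞}

lemma measurableSet_lrSuperlevelSet (hw : Measurable w) (hq : Measurable q) (γ : ℝ≥0∞) :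
    MeasurableSet (lrSuperlevelSet w q γ) :=
  measurableSet_lt (hw.const_mul γ) hq

lemma withDensity_lrSuperlevelSet_ne_top (hw : Measurable w) (hq : Measurable q)
    (hfin : ∫⁻ x, min (w x) (q x) ∂ρ ≠ ∞) {γ : ℝ≥0∞} (hγ : γ ≠ 0) :
    ρ.withDensity w (lrSuperlevelSet w q γ) ≠ ∞ := by
  have hmin : min 1 γ ≠ 0 := (lt_min one_pos (pos_iff_ne_zero.2 hγ)).ne'
  have hA := measurableSet_lrSuperlevelSet hw hq γ
  have hle : min 1 γ * ρ.withDensity w (lrSuperlevelSet w q γ) ≤ ∫⁻ x, min (w x) (q x) ∂ρ := by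
    rw [withDensity_apply _ hA, ← lintegral_const_mul' _ _
      (ne_top_of_le_ne_top ENNReal.one_ne_top (min_le_left _ _))]
    refine (setLIntegral_mono' hA fun x hx => ?_).trans (setLIntegral_le_lintegral _ _)
    rw [← min_mul_mul_right, one_mul]
    exact min_le_min le_rfl (le_of_lt hx)
  exact fun htop => hfin (top_le_iff.1 (by rwa [htop, ENNReal.mul_top hmin] at hle))

lemma measure_lrSuperlevelSet_le_of_lrQuantile_lt {μ : Measure Ω} {ε γ : ℝ≥0∞}
    (h : lrQuantile μ w q ε < γ) : μ (lrSuperlevelSet w q γ) ≤ ε := by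
  obtain ⟨γ', hγ', hγ'γ⟩ := sInf_lt_iff.1 h
  exact (measure_mono (lrSuperlevelSet_antitone hγ'γ.le)).trans hγ'

lemma lt_measure_lrSuperlevelSet_of_lt_lrQuantile {μ : Measure Ω} {ε γ : ℝ≥0∞}
    (h : γ < lrQuantile μ w q ε) : ε < μ (lrSuperlevelSet w q γ) :=
  not_le.1 fun hγ => notMem_of_lt_csInf' h (show γ ∈ {γ | μ (lrSuperlevelSet w q γ) ≤ ε} from hγ)

lemma withDensity_lrSuperlevelSet_lrQuantile_le (hw : Measurable w) (hw_fin : ∀ x, w x ≠ ∞)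
    (ε : ℝ≥0∞) :
    ρ.withDensity w (lrSuperlevelSet w q (lrQuantile (ρ.withDensity w) w q ε)) ≤ ε := by
  rcases (le_top : lrQuantile (ρ.withDensity w) w q ε ≤ ∞).eq_or_lt with htop | hlt
  · rw [htop, measure_mono_null lrSuperlevelSet_top_subset (withDensity_setOf_eq_zero hw)]
    exact zero_le
  obtain ⟨t, ht_anti, ht_mem, ht⟩ := exists_seq_strictAnti_tendsto' hlt
  have hmono : Monotone fun n => lrSuperlevelSet w q (t n) :=
    lrSuperlevelSet_antitone.comp ht_anti.antitone
  calc _ ≤ ρ.withDensity w (⋃ n, lrSuperlevelSet w q (t n)) :=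
        measure_mono (lrSuperlevelSet_subset_iUnion hw_fin ht)
    _ = ⨆ n, ρ.withDensity w (lrSuperlevelSet w q (t n)) :=
        hmono.measure_iUnion
    _ ≤ ε := iSup_le fun n => measure_lrSuperlevelSet_le_of_lrQuantile_lt (ht_mem n).1

lemma exists_superset_lrSuperlevelSet_lrQuantile (hw : Measurable w) (hq : Measurable q)
    (hw_fin : ∀ x, w x ≠ ∞) (hfin : ∫⁻ x, min (w x) (q x) ∂ρ ≠ ∞) {ε : ℝ≥0∞}
    (hpos : lrQuantile (ρ.withDensity w) w q ε ≠ 0) :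
    ∃ B, MeasurableSet B ∧ lrSuperlevelSet w q (lrQuantile (ρ.withDensity w) w q ε) ⊆ B ∧
      ρ.withDensity w B ≠ ∞ ∧ ε ≤ ρ.withDensity w B ∧
      ∀ x ∈ B, lrQuantile (ρ.withDensity w) w q ε * w x ≤ q x := by
  obtain ⟨θ, hθ_mono, hθ_mem, hθ⟩ := exists_seq_strictMono_tendsto' (pos_iff_ne_zero.2 hpos)
  have hmeas n := measurableSet_lrSuperlevelSet hw hq (θ n)
  have hfin₀ := withDensity_lrSuperlevelSet_ne_top hw hq hfin (hθ_mem 0).1.ne'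
  refine ⟨⋂ n, lrSuperlevelSet w q (θ n), .iInter hmeas,
    subset_iInter fun n => lrSuperlevelSet_antitone (hθ_mem n).2.le,
    ne_top_of_le_ne_top hfin₀ (measure_mono (iInter_subset _ 0)), ?_,
    fun x hx => mul_le_of_forall_mem_lrSuperlevelSet (hw_fin x) hθ (mem_iInter.1 hx)⟩
  have hanti : Antitone fun n => lrSuperlevelSet w q (θ n) :=
    lrSuperlevelSet_antitone.comp_monotone hθ_mono.monotone
  rw [hanti.measure_iInter (fun n => (hmeas n).nullMeasurableSet) ⟨0, hfin₀⟩]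
  exact le_iInf fun n => (lt_measure_lrSuperlevelSet_of_lt_lrQuantile (hθ_mem n).2).le

lemma lrQuantile_ne_top (hw : Measurable w) (hq : Measurable q) (hw_fin : ∀ x, w x ≠ ∞)
    (hq_fin : ∀ x, q x ≠ ∞) (hfin : ∫⁻ x, min (w x) (q x) ∂ρ ≠ ∞) {ε : ℝ≥0∞} (hε : ε ≠ 0) :
    lrQuantile (ρ.withDensity w) w q ε ≠ ∞ := fun htop => by
  obtain ⟨B, -, -, -, hεB, hBq⟩ :=
    exists_superset_lrSuperlevelSet_lrQuantile hw hq hw_fin hfin (htop ▸ ENNReal.top_ne_zero)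
  refine hε (le_zero_iff.1 (hεB.trans_eq (measure_mono_null (fun x hx => ?_)
    (withDensity_setOf_eq_zero hw))))
  by_contra hw0
  have := hBq x hx
  rw [htop, ENNReal.top_mul hw0, top_le_iff] at this
  exact hq_fin x this

lemma exists_randomization_lrQuantile (hw : Measurable w) (hq : Measurable q)
    (hw_fin : ∀ x, w x ≠ ∞) (hfin : ∫⁻ x, min (w x) (q x) ∂ρ ≠ ∞) (ε : ℝ≥0∞) :
    ∃ B c, MeasurableSet B ∧ c ∈ Icc (0 : ℝ) 1 ∧
      (∀ x ∈ B, lrQuantile (ρ.withDensity w) w q ε * w x ≤ q x) ∧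
      ρ.withDensity w (lrSuperlevelSet w q (lrQuantile (ρ.withDensity w) w q ε))
          + ENNReal.ofReal c * ρ.withDensity w
            (B \ lrSuperlevelSet w q (lrQuantile (ρ.withDensity w) w q ε)) ≤ ε ∧
      lrQuantile (ρ.withDensity w) w q ε *
          (ρ.withDensity w (lrSuperlevelSet w q (lrQuantile (ρ.withDensity w) w q ε))
            + ENNReal.ofReal c * ρ.withDensity w
              (B \ lrSuperlevelSet w q (lrQuantile (ρ.withDensity w) w q ε)))
        = lrQuantile (ρ.withDensity w) w q ε * ε := by
  set W := ρ.withDensity w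
  set γ₀ := lrQuantile W w q ε
  set A := lrSuperlevelSet w q γ₀
  have hA : MeasurableSet A := measurableSet_lrSuperlevelSet hw hq γ₀
  have hAε : W A ≤ ε := withDensity_lrSuperlevelSet_lrQuantile_le hw hw_fin ε
  by_cases hdet : γ₀ = 0 ∨ W A = ε
  · refine ⟨∅, 0, .empty, by simp, by simp, by simpa using hAε, ?_⟩
    rcases hdet with h | h <;> simp [h]
  rw [not_or] at hdet
  obtain ⟨B, hB, hAB, hB_top, hεB, hBq⟩ : ∃ B, MeasurableSet B ∧ A ⊆ B ∧ W B ≠ ∞ ∧ ε ≤ W B ∧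
      ∀ x ∈ B, γ₀ * w x ≤ q x :=
    exists_superset_lrSuperlevelSet_lrQuantile hw hq hw_fin hfin hdet.1
  rw [← union_eq_self_of_subset_left hAB, ← measure_add_sdiff hA.nullMeasurableSet] at hεB
  obtain ⟨c, hc, hc_eq⟩ := ENNReal.exists_add_ofReal_mul_eq hAε hεB
    (ne_top_of_le_ne_top hB_top (measure_mono sdiff_subset))
  exact ⟨B, c, hB, hc, hBq, hc_eq.le, by rw [hc_eq]⟩

end Quantile

theorem exists_test_lintegral_add_mul_eq {ρ : Measure Ω} {w q : Ω → ℝ≥0∞} (hw : Measurable w)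
    (hq : Measurable q) (hw_fin : ∀ x, w x ≠ ∞) (hq_fin : ∀ x, q x ≠ ∞)
    (hfin : ∫⁻ x, min (w x) (q x) ∂ρ ≠ ∞) (ε : ℝ≥0∞) :
    ∃ γ : ℝ≥0∞, (γ = ∞ → ε = 0) ∧ ∃ T : Ω → ℝ, Measurable T ∧ (∀ x, T x ∈ Icc (0 : ℝ) 1) ∧
      ∫⁻ x, ENNReal.ofReal (T x) ∂ρ.withDensity w ≤ ε ∧
      ∫⁻ x, ENNReal.ofReal (1 - T x) ∂ρ.withDensity q + γ * ε
        = ∫⁻ x, min (q x) (γ * w x) ∂ρ := by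
  obtain ⟨B, c, hB, hc, hBq, hlevel, hmul⟩ :=
    exists_randomization_lrQuantile hw hq hw_fin hfin ε
  have hA := measurableSet_lrSuperlevelSet hw hq (lrQuantile (ρ.withDensity w) w q ε)
  have hT := measurable_randomizedTest (c := c) hA hB
  refine ⟨_, fun htop => not_not.1 fun hε => lrQuantile_ne_top hw hq hw_fin hq_fin hfin hε htop,
    _, hT, randomizedTest_mem_Icc hc, ?_, ?_⟩
  · rwa [lintegral_ofReal_randomizedTest hA hB]
  · rw [← hmul, ← lintegral_ofReal_randomizedTest hA hB,
      (isNeymanPearsonTest_randomizedTest c hBq).lintegral_min_eq hw hq hT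
        (randomizedTest_mem_Icc hc)]

lemma exists_ne_top_withDensity_eq (μ ρ : Measure Ω) [SigmaFinite μ] [SigmaFinite ρ]
    (h : μ ≪ ρ) : ∃ f : Ω → ℝ≥0∞, Measurable f ∧ (∀ x, f x ≠ ∞) ∧
      μ.rnDeriv ρ =ᵐ[ρ] f ∧ μ = ρ.withDensity f := by
  have hae : μ.rnDeriv ρ =ᵐ[ρ] fun x => ((μ.rnDeriv ρ x).toNNReal : ℝ≥0∞) :=
    (Measure.rnDeriv_lt_top μ ρ).mono fun x hx => (ENNReal.coe_toNNReal hx.ne).symm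
  exact ⟨_, (Measure.measurable_rnDeriv μ ρ).ennreal_toNNReal.coe_nnreal_ennreal,
    fun _ => ENNReal.coe_ne_top, hae,
    (Measure.withDensity_rnDeriv_eq μ ρ h).symm.trans (withDensity_congr_ae hae)⟩

section Duality

variable {ρ : Measure Ω} {w q : Ω → ℝ≥0∞}

lemma dualTransform_le_betaNPE (hw : Measurable w) (hq : Measurable q) (ε : ℝ) :
    dualTransform (fun γ => ∫⁻ x, min (q x) (ENNReal.ofReal γ * w x) ∂ρ) ε
      ≤ betaNPE (ρ.withDensity q) (ρ.withDensity w) ε := by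
  refine iSup₂_le fun γ hγ => le_iInf₂ fun T hT => le_iInf₂ fun hT01 hlevel =>
    EReal.sub_le_of_le_add ?_
  have hε : 0 ≤ ε := EReal.coe_nonneg.1 ((EReal.coe_ennreal_nonneg _).trans hlevel)
  rw [← EReal.coe_ennreal_ofReal_of_nonneg (mul_nonneg hγ hε), ← EReal.coe_ennreal_add,
    EReal.coe_ennreal_le_coe_ennreal_iff, ENNReal.ofReal_mul hγ]
  refine (lintegral_min_le_lintegral_one_sub_add hw hq hT hT01 _).trans ?_
  gcongr
  exact (EReal.coe_ennreal_le_coe_iff_le_ofReal hε).1 hlevel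

lemma betaNPE_le_dualTransform (hw : Measurable w) (hq : Measurable q) (hw_fin : ∀ x, w x ≠ ∞)
    (hq_fin : ∀ x, q x ≠ ∞) (hfin : ∫⁻ x, min (w x) (q x) ∂ρ ≠ ∞) {ε : ℝ} (hε : 0 ≤ ε) :
    betaNPE (ρ.withDensity q) (ρ.withDensity w) ε
      ≤ dualTransform (fun γ => ∫⁻ x, min (q x) (ENNReal.ofReal γ * w x) ∂ρ) ε := by
  obtain ⟨γ, hγ_top, T, hT, hT01, hlevel, hdual⟩ :=
    exists_test_lintegral_add_mul_eq hw hq hw_fin hq_fin hfin (ENNReal.ofReal ε)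
  refine (betaNPE_le hT hT01 ((EReal.coe_ennreal_le_coe_iff_le_ofReal hε).2 hlevel)).trans ?_
  rcases eq_or_ne γ ∞ with rfl | hγ
  · have hε0 : ε = 0 := le_antisymm (ENNReal.ofReal_eq_zero.1 (hγ_top rfl)) hε
    rw [hγ_top rfl, mul_zero, add_zero, lintegral_min_top_mul_eq_iSup hw hq] at hdual
    rw [hdual, Monotone.map_ciSup_of_continuousAt continuous_coe_ennreal_ereal.continuousAt
      EReal.coe_ennreal_strictMono.monotone]
    refine iSup_le fun n => le_iSup₂_of_le (n : ℝ) n.cast_nonneg ?_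
    simp [hε0]
  · refine le_iSup₂_of_le γ.toReal ENNReal.toReal_nonneg (le_of_eq ?_)
    rw [← ENNReal.ofReal_toReal hγ, ← ENNReal.ofReal_mul ENNReal.toReal_nonneg] at hdual
    dsimp only
    rw [← hdual, EReal.coe_ennreal_add,
      EReal.coe_ennreal_ofReal_of_nonneg (mul_nonneg ENNReal.toReal_nonneg hε),
      EReal.add_sub_cancel_right]

end Duality

/-- Convex-conjugate (dual) characterization of `β`: for σ-finite `W, Q ≪ ρ` with
`∫ min(dW/dρ, dQ/dρ) dρ < ∞`, `β(ε) = sup_{γ ≥ 0} (η(γ) − γ·ε)` for all real `ε`;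
in particular `β` is nonincreasing, lower semicontinuous, and convex. -/
theorem betaNP_dual_characterization (Q W ρ : Measure Ω)
    [SigmaFinite W] [SigmaFinite Q] [SigmaFinite ρ]
    (hW : W ≪ ρ) (hQ : Q ≪ ρ)
    (h1 : ∫⁻ x, min (W.rnDeriv ρ x) (Q.rnDeriv ρ x) ∂ρ ≠ ⊤) :
    (∀ ε : ℝ, betaNPE Q W ε
        = ⨆ (γ : ℝ) (_ : 0 ≤ γ),
            ((entSpecQW Q W ρ γ : EReal) - ((γ * ε : ℝ) : EReal))) ∧
    Antitone (betaNPE Q W) ∧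
    LowerSemicontinuous (betaNPE Q W) ∧
    (∀ a b t : ℝ, 0 ≤ t → t ≤ 1 →
      betaNPE Q W (t * a + (1 - t) * b)
        ≤ (t : EReal) * betaNPE Q W a + ((1 - t : ℝ) : EReal) * betaNPE Q W b) := by
  obtain ⟨w, hw, hw_fin, hw_ae, hWw⟩ := exists_ne_top_withDensity_eq W ρ hW
  obtain ⟨q, hq, hq_fin, hq_ae, hQq⟩ := exists_ne_top_withDensity_eq Q ρ hQ
  have hη : entSpecQW Q W ρ = fun γ => ∫⁻ x, min (q x) (ENNReal.ofReal γ * w x) ∂ρ :=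
    funext fun γ => lintegral_congr_ae <| by
      filter_upwards [hw_ae, hq_ae] with x hwx hqx
      rw [hwx, hqx]
  have hfin : ∫⁻ x, min (w x) (q x) ∂ρ ≠ ∞ := ne_of_eq_of_ne (lintegral_congr_ae <| by
    filter_upwards [hw_ae, hq_ae] with x hwx hqx
    rw [hwx, hqx]) h1
  have hdual : ∀ ε, betaNPE Q W ε = dualTransform (entSpecQW Q W ρ) ε := fun ε => by
    rcases lt_or_ge ε 0 with hε | hε
    · rw [betaNPE_of_neg hε, dualTransform_of_neg hε]
    rw [hη, hWw, hQq]
    exact le_antisymm (betaNPE_le_dualTransform hw hq hw_fin hq_fin hfin hε)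
      (dualTransform_le_betaNPE hw hq ε)
  have hη_fin : ∀ γ, entSpecQW Q W ρ γ ≠ ∞ := fun γ => by
    rw [hη]; exact lintegral_min_ne_top hfin ENNReal.ofReal_ne_top
  refine ⟨hdual, betaNPE_antitone Q W, ?_, fun a b t ht0 ht1 => ?_⟩
  · rw [funext hdual]
    exact lowerSemicontinuous_dualTransform hη_fin
  · simp only [hdual]
    exact dualTransform_convex hη_fin ht0 ht1
end

section
/- In the setting of the preceding duality (σ-finite W, Q with η(1) < ∞), for every ε ≥ 0 one has the spectral representation β(ε) = ∫_0^∞ max(W({dQ̃/dW > t}) − ε, 0) dt, where Q̃ is the W-absolutely-continuous component of Q. -/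
open MeasureTheory Set ENNReal

variable {Ω : Type*} [MeasurableSpace Ω]

/-- `β(ε)`: the minimal Type II error over randomized tests `T : Ω → [0,1]` with
Type I error `∫ T dW ≤ ε`. -/
noncomputable def betaNP (Q W : Measure Ω) (ε : ℝ) : ℝ≥0∞ :=
  ⨅ (T : Ω → ℝ) (_ : Measurable T) (_ : ∀ x, T x ∈ Set.Icc (0 : ℝ) 1)
    (_ : ∫⁻ x, ENNReal.ofReal (T x) ∂W ≤ ENNReal.ofReal ε),
    ∫⁻ x, ENNReal.ofReal (1 - T x) ∂Q

/-!
Write `f = dQ/dW` and `G t = W {f > t}`. For a test `T` of level `ε`,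
`G t - ε ≤ ∫_{f > t} (1 - T) dW` for every `t`, and by the layer-cake formula the integral of the
right-hand side over `t > 0` is `∫ (1 - T) f dW ≤ ∫ (1 - T) dQ`; hence `∫ (G - ε)₊ ≤ β(ε)`.

Conversely, let `c` be the least threshold with `G c ≤ ε` (it is attained since `G` is right
continuous) and choose `γ` so that the Neyman–Pearson test, which rejects where `f > c`, with
probability `γ` where `f = c`, and on a `W`-null set carrying the singular part of `Q`, has level
`ε`. Its Type II error is `∫_{f < c} f dW + (1 - γ) c W {f = c}`, and the layer-cake formula
bounds it by `∫ (G - ε)₊`: for `t < c`, `G t - ε ≥ W {t < f < c} + (1 - γ) W {f = c}` because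
`W {f ≥ c} ≥ ε`, by continuity of `W` from above. That step needs `G` finite on `(0, ∞)`, which
holds unless `∫ (G - ε)₊ = ∞`.
-/

theorem volume_restrict_Ioi_ofReal_lt (c : ℝ≥0∞) :
    volume.restrict (Ioi (0 : ℝ)) {t | ENNReal.ofReal t < c} = c := by
  rw [Measure.restrict_apply (measurableSet_lt ENNReal.measurable_ofReal measurable_const)]
  rcases eq_or_ne c ⊤ with rfl | hc
  · simp
  · have : {t : ℝ | ENNReal.ofReal t < c} ∩ Ioi 0 = Ioo 0 c.toReal := by
      ext t
      simp only [mem_inter_iff, mem_ofPred_eq, mem_Ioi, mem_Ioo]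
      exact ⟨fun h => ⟨h.2, (ofReal_lt_iff_lt_toReal h.2.le hc).mp h.1⟩,
        fun h => ⟨(ofReal_lt_iff_lt_toReal h.1.le hc).mpr h.2, h.1⟩⟩
    rw [this, Real.volume_Ioo, sub_zero, ofReal_toReal hc]

theorem lintegral_eq_lintegral_meas_ofReal_lt (μ : Measure Ω) [SFinite μ] {f : Ω → ℝ≥0∞}
    (hf : Measurable f) :
    ∫⁻ x, f x ∂μ = ∫⁻ t in Ioi (0 : ℝ), μ {x | ENNReal.ofReal t < f x} := by
  have hE : MeasurableSet {p : Ω × ℝ | ENNReal.ofReal p.2 < f p.1} :=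
    measurableSet_lt (ENNReal.measurable_ofReal.comp measurable_snd) (hf.comp measurable_fst)
  calc ∫⁻ x, f x ∂μ
        = ∫⁻ x, volume.restrict (Ioi (0 : ℝ)) {t | ENNReal.ofReal t < f x} ∂μ := by
        simp only [volume_restrict_Ioi_ofReal_lt]
    _ = (μ.prod (volume.restrict (Ioi (0 : ℝ)))) {p | ENNReal.ofReal p.2 < f p.1} :=
        (Measure.prod_apply hE).symm
    _ = ∫⁻ t in Ioi (0 : ℝ), μ {x | ENNReal.ofReal t < f x} := Measure.prod_apply_symm hE

theorem lintegral_meas_sub_le_betaNP (Q W : Measure Ω) [SFinite W] (ε : ℝ) :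
    ∫⁻ t in Ioi (0 : ℝ), (W {x | ENNReal.ofReal t < Q.rnDeriv W x} - ENNReal.ofReal ε)
      ≤ betaNP Q W ε := by
  have hf : Measurable (Q.rnDeriv W) := Measure.measurable_rnDeriv Q W
  refine le_iInf fun T => le_iInf fun hT => le_iInf fun hT01 => le_iInf fun hTε => ?_
  set h : Ω → ℝ≥0∞ := fun x => ENNReal.ofReal (1 - T x)
  have hh : Measurable h := ENNReal.measurable_ofReal.comp (measurable_const.sub hT)
  have hsplit (s : Set Ω) (hs : MeasurableSet s) :
      W s - ENNReal.ofReal ε ≤ W.withDensity h s := by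
    have hsum : ∀ x, h x + ENNReal.ofReal (T x) = 1 := fun x => by
      rw [← ENNReal.ofReal_add (sub_nonneg.2 (hT01 x).2) (hT01 x).1, sub_add_cancel, ofReal_one]
    calc W s - ENNReal.ofReal ε
        = ∫⁻ x in s, h x ∂W + ∫⁻ x in s, ENNReal.ofReal (T x) ∂W - ENNReal.ofReal ε := by
          rw [← lintegral_add_left hh, funext hsum, setLIntegral_one]
      _ ≤ ∫⁻ x in s, h x ∂W :=
          tsub_le_iff_right.2 (add_le_add_right ((setLIntegral_le_lintegral s _).trans hTε) _)
      _ = W.withDensity h s := (withDensity_apply h hs).symm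
  calc ∫⁻ t in Ioi (0 : ℝ), (W {x | ENNReal.ofReal t < Q.rnDeriv W x} - ENNReal.ofReal ε)
      ≤ ∫⁻ t in Ioi (0 : ℝ), W.withDensity h {x | ENNReal.ofReal t < Q.rnDeriv W x} :=
        lintegral_mono fun t => hsplit _ (measurableSet_lt measurable_const hf)
    _ = ∫⁻ x, Q.rnDeriv W x ∂(W.withDensity h) :=
        (lintegral_eq_lintegral_meas_ofReal_lt _ hf).symm
    _ = ∫⁻ x, h x ∂(W.withDensity (Q.rnDeriv W)) := by
        rw [lintegral_withDensity_eq_lintegral_mul _ hh hf,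
          lintegral_withDensity_eq_lintegral_mul _ hf hh]
        simp only [Pi.mul_apply, mul_comm]
    _ ≤ ∫⁻ x, h x ∂Q := lintegral_mono' (Measure.withDensity_rnDeriv_le Q W) le_rfl

section NeymanPearson

variable (S : Set Ω) (f : Ω → ℝ≥0∞) (c γ : ℝ≥0∞)

open Classical in
noncomputable def neymanPearsonTest (x : Ω) : ℝ :=
  if x ∈ S ∨ c < f x then 1 else if f x = c then γ.toReal else 0

variable {S f c γ}

theorem measurable_neymanPearsonTest (hS : MeasurableSet S) (hf : Measurable f) :
    Measurable (neymanPearsonTest S f c γ) :=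
  Measurable.ite (hS.union (measurableSet_lt measurable_const hf)) measurable_const
    (Measurable.ite (hf (measurableSet_singleton c)) measurable_const measurable_const)

omit [MeasurableSpace Ω] in
theorem neymanPearsonTest_mem_Icc (hγ : γ ≤ 1) (x : Ω) :
    neymanPearsonTest S f c γ x ∈ Icc (0 : ℝ) 1 := by
  have : γ.toReal ≤ 1 := toReal_le_of_le_ofReal zero_le_one (by simpa using hγ)
  unfold neymanPearsonTest
  split_ifs <;> simp [this]

theorem lintegral_neymanPearsonTest {W : Measure Ω} (hS : W S = 0) (hf : Measurable f)
    (hγ : γ ≠ ⊤) :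
    ∫⁻ x, ENNReal.ofReal (neymanPearsonTest S f c γ x) ∂W
      = W {x | c < f x} + γ * W {x | f x = c} := by
  have hA : MeasurableSet {x | c < f x} := measurableSet_lt measurable_const hf
  have hB : MeasurableSet {x | f x = c} := hf (measurableSet_singleton c)
  rw [← lintegral_indicator_one hA, ← lintegral_indicator_const hB, ← lintegral_add_left
    (measurable_one.indicator hA)]
  refine lintegral_congr_ae ((measure_eq_zero_iff_ae_notMem.1 hS).mono fun x hx => ?_)
  rcases lt_trichotomy c (f x) with h | h | h
  · simp [neymanPearsonTest, hx, h, h.ne']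
  · simp [neymanPearsonTest, hx, h, ofReal_toReal hγ]
  · simp [neymanPearsonTest, hx, h.not_gt, h.ne]

theorem lintegral_one_sub_neymanPearsonTest {Q W : Measure Ω} [Q.HaveLebesgueDecomposition W]
    (hS : MeasurableSet S) (hWS : W S = 0) (hQS : Q.singularPart W Sᶜ = 0) (hγ : γ ≤ 1) :
    ∫⁻ x, ENNReal.ofReal (1 - neymanPearsonTest S (Q.rnDeriv W) c γ x) ∂Q
      = ∫⁻ x in {x | Q.rnDeriv W x < c}, Q.rnDeriv W x ∂W
        + (1 - γ) * c * W {x | Q.rnDeriv W x = c} := by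
  set f := Q.rnDeriv W
  have hf : Measurable f := Measure.measurable_rnDeriv Q W
  have hA : MeasurableSet {x | f x < c} := measurableSet_lt hf measurable_const
  have hB : MeasurableSet {x | f x = c} := hf (measurableSet_singleton c)
  have hT : Measurable fun x => ENNReal.ofReal (1 - neymanPearsonTest S f c γ x) :=
    ENNReal.measurable_ofReal.comp (measurable_const.sub (measurable_neymanPearsonTest hS hf))
  have h_singular :
      ∫⁻ x, ENNReal.ofReal (1 - neymanPearsonTest S f c γ x) ∂(Q.singularPart W) = 0 := by
    have hS_ae : ∀ᵐ x ∂Q.singularPart W, x ∈ S := mem_ae_iff.2 hQS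
    exact (lintegral_congr_ae (hS_ae.mono fun x hx => by simp [neymanPearsonTest, hx])).trans
      lintegral_zero
  have h_one_sub : ENNReal.ofReal (1 - γ.toReal) = 1 - γ := by
    rw [ENNReal.ofReal_sub _ toReal_nonneg, ofReal_one,
      ofReal_toReal (ne_top_of_le_ne_top one_ne_top hγ)]
  conv_lhs => rw [← Measure.singularPart_add_rnDeriv Q W]
  rw [lintegral_add_measure, h_singular, zero_add, lintegral_withDensity_eq_lintegral_mul _ hf hT,
    ← lintegral_indicator hA, ← lintegral_indicator_const hB,
    ← lintegral_add_left (hf.indicator hA)]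
  refine lintegral_congr_ae ((measure_eq_zero_iff_ae_notMem.1 hWS).mono fun x hx => ?_)
  rcases lt_trichotomy c (f x) with h | h | h
  · simp [neymanPearsonTest, hx, h, h.ne', h.not_gt]
  · simp [neymanPearsonTest, hx, h, h_one_sub, mul_comm]
  · simp [neymanPearsonTest, hx, h, h.not_gt, h.ne]

end NeymanPearson

theorem betaNP_le_of_threshold (Q W : Measure Ω) [Q.HaveLebesgueDecomposition W] (ε : ℝ)
    {c γ : ℝ≥0∞} (hγ : γ ≤ 1)
    (hI : W {x | c < Q.rnDeriv W x} + γ * W {x | Q.rnDeriv W x = c} ≤ ENNReal.ofReal ε) :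
    betaNP Q W ε ≤ ∫⁻ x in {x | Q.rnDeriv W x < c}, Q.rnDeriv W x ∂W
      + (1 - γ) * c * W {x | Q.rnDeriv W x = c} := by
  obtain ⟨s, hs, hQs, hWs⟩ := Measure.mutuallySingular_singularPart Q W
  have hQsc : Q.singularPart W sᶜᶜ = 0 := by rwa [compl_compl]
  have hf : Measurable (Q.rnDeriv W) := Measure.measurable_rnDeriv Q W
  rw [← lintegral_one_sub_neymanPearsonTest hs.compl hWs hQsc hγ]
  refine iInf_le_of_le _ <| iInf_le_of_le (measurable_neymanPearsonTest hs.compl hf) <|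
    iInf_le_of_le (neymanPearsonTest_mem_Icc hγ) <| iInf_le_of_le ?_ le_rfl
  rwa [lintegral_neymanPearsonTest hWs hf (ne_top_of_le_ne_top one_ne_top hγ)]

theorem ENNReal.exists_le_one_mul_le (a d : ℝ≥0∞) :
    ∃ γ ≤ 1, γ * a ≤ d ∧ (d ≤ a → (1 - γ) * a + d ≤ a) := by
  refine ⟨min 1 (d / a), min_le_left _ _,
    (mul_le_mul_left (min_le_right _ _) a).trans (by rw [mul_comm]; exact mul_div_le),
    fun hda => ?_⟩
  rcases eq_or_ne a ⊤ with rfl | ha_top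
  · simp
  rcases eq_or_ne a 0 with rfl | ha0
  · simp [nonpos_iff_eq_zero.1 hda]
  have hγ : min 1 (d / a) * a = d := by
    rw [min_eq_right (div_le_of_le_mul (by rwa [one_mul])), ENNReal.div_mul_cancel ha0 ha_top]
  rw [ENNReal.sub_mul fun _ _ => ha_top, one_mul, hγ, tsub_add_cancel_of_le hda]

theorem measure_sInf_lt_le (μ : Measure Ω) (f : Ω → ℝ≥0∞) (δ : ℝ≥0∞) :
    μ {x | sInf {t | μ {x | t < f x} ≤ δ} < f x} ≤ δ := by
  have h_top : ⊤ ∈ {t | μ {x | t < f x} ≤ δ} := by simp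
  obtain ⟨u, hu_anti, hu_lim, hu_mem⟩ :=
    exists_seq_tendsto_sInf ⟨⊤, h_top⟩ (OrderBot.bddBelow _)
  have h_eq : {x | sInf {t | μ {x | t < f x} ≤ δ} < f x} = ⋃ n, {x | u n < f x} := by
    refine Set.ext fun x => ⟨fun hx => ?_, fun hx => ?_⟩
    · obtain ⟨n, hn⟩ := (hu_lim.eventually (gt_mem_nhds hx)).exists
      exact mem_iUnion.2 ⟨n, hn⟩
    · obtain ⟨n, hn⟩ := mem_iUnion.1 hx
      exact (sInf_le (hu_mem n)).trans_lt hn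
  rw [h_eq, Monotone.measure_iUnion (s := fun n => {x | u n < f x})
    fun m n hmn x hx => (hu_anti hmn).trans_lt hx]
  exact iSup_le hu_mem

theorem le_measure_sInf_le {μ : Measure Ω} {f : Ω → ℝ≥0∞} (hf : Measurable f) {δ : ℝ≥0∞}
    (hfin : ∀ t, 0 < t → μ {x | t < f x} ≠ ⊤)
    (hc : sInf {t | μ {x | t < f x} ≤ δ} ≠ 0) :
    δ ≤ μ {x | sInf {t | μ {x | t < f x} ≤ δ} ≤ f x} := by
  set c := sInf {t | μ {x | t < f x} ≤ δ}
  obtain ⟨u, hu_mono, hu_mem, hu_lim⟩ := exists_seq_strictMono_tendsto' (pos_iff_ne_zero.2 hc)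
  have h_eq : {x | c ≤ f x} = ⋂ n, {x | u n < f x} := by
    refine Set.ext fun x => ⟨fun hx => mem_iInter.2 fun n => (hu_mem n).2.trans_le hx,
      fun hx => ?_⟩
    exact le_of_tendsto' hu_lim fun n => (mem_iInter.1 hx n).le
  rw [h_eq, Antitone.measure_iInter (s := fun n => {x | u n < f x})
    (fun m n hmn x hx => (hu_mono.monotone hmn).trans_lt hx)
    (fun n => (measurableSet_lt measurable_const hf).nullMeasurableSet)
    ⟨0, hfin _ (hu_mem 0).1⟩]
  exact le_iInf fun n => (not_le.1 fun h => (hu_mem n).2.not_ge (sInf_le h)).le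

theorem exists_neymanPearson_threshold {μ : Measure Ω} {f : Ω → ℝ≥0∞} (hf : Measurable f)
    (δ : ℝ≥0∞) (hfin : ∀ t, 0 < t → μ {x | t < f x} ≠ ⊤) :
    ∃ c γ : ℝ≥0∞, γ ≤ 1 ∧ μ {x | c < f x} + γ * μ {x | f x = c} ≤ δ ∧
      (c ≠ 0 → (1 - γ) * μ {x | f x = c} + δ ≤ μ {x | c ≤ f x}) := by
  set c := sInf {t | μ {x | t < f x} ≤ δ}
  have h_gt : μ {x | c < f x} ≤ δ := measure_sInf_lt_le μ f δ
  have h_ge : μ {x | c ≤ f x} = μ {x | c < f x} + μ {x | f x = c} := by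
    have hB : MeasurableSet {x | f x = c} := hf (measurableSet_singleton c)
    have h_union : {x | c ≤ f x} = {x | c < f x} ∪ {x | f x = c} :=
      Set.ext fun x => by simp only [mem_union, mem_ofPred_eq, le_iff_lt_or_eq, eq_comm]
    rw [h_union, measure_union (disjoint_left.2 fun x hlt heq => hlt.ne' heq) hB]
  obtain ⟨γ, hγ, hγ_le, hγ_add⟩ :=
    ENNReal.exists_le_one_mul_le (μ {x | f x = c}) (δ - μ {x | c < f x})
  refine ⟨c, γ, hγ, ?_, fun hc => ?_⟩
  · calc μ {x | c < f x} + γ * μ {x | f x = c} ≤ μ {x | c < f x} + (δ - μ {x | c < f x}) :=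
          add_le_add_right hγ_le _
      _ = δ := add_tsub_cancel_of_le h_gt
  · have h_sub : δ - μ {x | c < f x} ≤ μ {x | f x = c} :=
      tsub_le_iff_left.2 (h_ge ▸ le_measure_sInf_le hf hfin hc)
    calc (1 - γ) * μ {x | f x = c} + δ
        = (1 - γ) * μ {x | f x = c} + (δ - μ {x | c < f x}) + μ {x | c < f x} := by
          rw [add_assoc, tsub_add_cancel_of_le h_gt]
      _ ≤ μ {x | f x = c} + μ {x | c < f x} := add_le_add_left (hγ_add h_sub) _
      _ = μ {x | c ≤ f x} := by rw [h_ge, add_comm]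

theorem measure_lt_ne_top_of_lintegral_meas_sub_ne_top {μ : Measure Ω} {f : Ω → ℝ≥0∞}
    {δ : ℝ≥0∞} (hδ : δ ≠ ⊤)
    (h : ∫⁻ t in Ioi (0 : ℝ), (μ {x | ENNReal.ofReal t < f x} - δ) ≠ ⊤) {s : ℝ≥0∞}
    (hs : 0 < s) : μ {x | s < f x} ≠ ⊤ := by
  intro h_top
  obtain ⟨r, -, hr, hrs⟩ := ENNReal.lt_iff_exists_real_btwn.1 hs
  refine h (eq_top_iff.2 ?_)
  calc ⊤ = ∫⁻ _ in Ioo (0 : ℝ) r, ⊤ := by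
        rw [setLIntegral_const, Real.volume_Ioo, sub_zero, top_mul hr.ne']
    _ ≤ ∫⁻ t in Ioo (0 : ℝ) r, (μ {x | ENNReal.ofReal t < f x} - δ) := by
        refine setLIntegral_mono' measurableSet_Ioo fun t ht => ?_
        have h_sub : {x | s < f x} ⊆ {x | ENNReal.ofReal t < f x} := fun x hx =>
          ((ofReal_le_ofReal ht.2.le).trans_lt hrs).trans hx
        have h_mono := measure_mono (μ := μ) h_sub
        rw [h_top, top_le_iff] at h_mono
        rw [h_mono, top_sub hδ]
    _ ≤ ∫⁻ t in Ioi (0 : ℝ), (μ {x | ENNReal.ofReal t < f x} - δ) :=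
        lintegral_mono_set Ioo_subset_Ioi_self

theorem setLIntegral_lt_add_mul_le_lintegral_meas_sub (μ : Measure Ω) [SFinite μ]
    {f : Ω → ℝ≥0∞} (hf : Measurable f) {c γ δ : ℝ≥0∞} (hδ : δ ≠ ⊤)
    (h : c ≠ 0 → (1 - γ) * μ {x | f x = c} + δ ≤ μ {x | c ≤ f x}) :
    ∫⁻ x in {x | f x < c}, f x ∂μ + (1 - γ) * c * μ {x | f x = c}
      ≤ ∫⁻ t in Ioi (0 : ℝ), (μ {x | ENNReal.ofReal t < f x} - δ) := by
  set a := (1 - γ) * μ {x | f x = c}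
  have hA : MeasurableSet {x | f x < c} := measurableSet_lt hf measurable_const
  have hC : MeasurableSet {t : ℝ | ENNReal.ofReal t < c} :=
    measurableSet_lt ENNReal.measurable_ofReal measurable_const
  have h_atom : (1 - γ) * c * μ {x | f x = c}
      = ∫⁻ t in Ioi (0 : ℝ), {t : ℝ | ENNReal.ofReal t < c}.indicator (fun _ => a) t := by
    rw [lintegral_indicator_const hC, volume_restrict_Ioi_ofReal_lt]
    ring
  rw [lintegral_eq_lintegral_meas_ofReal_lt _ hf, h_atom,
    ← lintegral_add_right _ (measurable_const.indicator hC)]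
  refine lintegral_mono fun t => ?_
  rw [Measure.restrict_apply (measurableSet_lt measurable_const hf)]
  by_cases ht : ENNReal.ofReal t < c
  · rw [indicator_of_mem (show t ∈ {t : ℝ | ENNReal.ofReal t < c} from ht)]
    refine ENNReal.le_sub_of_add_le_right hδ ?_
    calc μ ({x | ENNReal.ofReal t < f x} ∩ {x | f x < c}) + a + δ
        ≤ μ ({x | ENNReal.ofReal t < f x} ∩ {x | f x < c}) + μ {x | c ≤ f x} := by
          rw [add_assoc]
          exact add_le_add_right (h (ne_bot_of_gt ht)) _
      _ = μ {x | ENNReal.ofReal t < f x} := by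
          rw [← measure_inter_add_sdiff {x | ENNReal.ofReal t < f x} hA]
          congr 2
          refine Set.ext fun x => ?_
          simp only [mem_sdiff, mem_ofPred_eq, not_lt]
          exact ⟨fun hx => ⟨ht.trans_le hx, hx⟩, fun hx => hx.2⟩
  · have : {x | ENNReal.ofReal t < f x} ∩ {x | f x < c} = ∅ :=
      eq_empty_of_forall_notMem fun x hx => ht (hx.1.trans hx.2)
    simp [indicator_of_notMem (show t ∉ {t : ℝ | ENNReal.ofReal t < c} from ht), this]

theorem betaNP_spectral_repr_general (Q W : Measure Ω)
    [SigmaFinite W] [SigmaFinite Q] :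
    ∀ ε : ℝ, 0 ≤ ε →
      betaNP Q W ε
        = ∫⁻ t in Set.Ioi (0 : ℝ),
            (W {x | ENNReal.ofReal t < Q.rnDeriv W x} - ENNReal.ofReal ε) := by
  intro ε _
  have hf : Measurable (Q.rnDeriv W) := Measure.measurable_rnDeriv Q W
  refine le_antisymm ?_ (lintegral_meas_sub_le_betaNP Q W ε)
  by_cases h_top : ∫⁻ t in Ioi (0 : ℝ),
      (W {x | ENNReal.ofReal t < Q.rnDeriv W x} - ENNReal.ofReal ε) = ⊤
  · exact h_top ▸ le_top
  obtain ⟨c, γ, hγ, h_level, h_atom⟩ := exists_neymanPearson_threshold hf (ENNReal.ofReal ε)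
    fun _ => measure_lt_ne_top_of_lintegral_meas_sub_ne_top ofReal_ne_top h_top
  exact (betaNP_le_of_threshold Q W ε hγ h_level).trans
    (setLIntegral_lt_add_mul_le_lintegral_meas_sub W hf ofReal_ne_top h_atom)

/-- Spectral representation of `β`: for σ-finite `W, Q` with `η(1) < ∞`, for every
`ε ≥ 0`, `β(ε) = ∫_0^∞ (W({dQ̃/dW > t}) − ε)₊ dt`, where `Q̃` is the
`W`-absolutely-continuous component of `Q` (so `dQ̃/dW` is the Radon–Nikodym
derivative of `Q` with respect to `W`). -/
theorem betaNP_spectral_repr (Q W ρ : Measure Ω)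
    [SigmaFinite W] [SigmaFinite Q] [SigmaFinite ρ]
    (hW : W ≪ ρ) (hQ : Q ≪ ρ)
    (h1 : ∫⁻ x, min (W.rnDeriv ρ x) (Q.rnDeriv ρ x) ∂ρ ≠ ⊤) :
    ∀ ε : ℝ, 0 ≤ ε →
      betaNP Q W ε
        = ∫⁻ t in Set.Ioi (0 : ℝ),
            (W {x | ENNReal.ofReal t < Q.rnDeriv W x} - ENNReal.ofReal ε) :=
  betaNP_spectral_repr_general Q W
end

section
/- Let W be a probability measure and Q a σ-finite measure on the same space with W ≪ Q, and let β(ε) be the minimal randomized-test Type II error and F⁺ the upper quantile of the likelihood-ratio CDF F(γ) = W({dW/dQ ≤ γ}). Then for every ε ∈ (0,1): (1 − ε)/F⁺(ε) ≥ β(ε), and for every δ ∈ (0, 1 − ε), β(ε) ≥ δ/F⁺(ε + δ). -/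
open MeasureTheory Set ENNReal

variable {Ω : Type*} [MeasurableSpace Ω]

/-- The (real-valued) upper likelihood-ratio quantile
`F⁺(ε) = inf{γ : W({dW/dQ ≤ γ}) > ε}`. -/
noncomputable def lrUpperQR (W Q : Measure Ω) (ε : ℝ) : ℝ :=
  sInf {γ : ℝ | ENNReal.ofReal ε < W {x | W.rnDeriv Q x ≤ ENNReal.ofReal γ}}

/-!
Write `f = dW/dQ`. The distribution function `γ ↦ W {f ≤ γ}` is monotone and right-continuous,
so `q = F⁺(ε)` satisfies `W {f < q} ≤ ε ≤ W {f ≤ q}`, and `q > 0` because `f > 0` `W`-a.e.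

For the upper bound, the Neyman–Pearson test that rejects on `{f < q}` and randomizes on
`{f = q}` has Type I error exactly `ε`; since `1 - T` vanishes where `f < q`,
`∫ (1 - T) dQ ≤ q⁻¹ ∫ (1 - T) f dQ = (1 - ε) / q`.

For the lower bound, let `A = {f ≤ F⁺(ε + δ)}`. Any test of Type I error at most `ε` has
`∫_A (1 - T) dW ≥ W A - ε ≥ δ`, while `dW ≤ F⁺(ε + δ) dQ` on `A`.
-/

open Filter Topology

section Quantile

variable {F : ℝ → ℝ≥0∞} {e : ℝ≥0∞}

lemma mem_lowerBounds_of_apply_le (hF : Monotone F) {γ₀ : ℝ} (h : F γ₀ ≤ e) :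
    γ₀ ∈ lowerBounds {γ | e < F γ} :=
  fun _ hγ => (hF.reflect_lt (h.trans_lt hγ)).le

lemma apply_le_of_lt_sInf (hbdd : BddBelow {γ | e < F γ}) {γ : ℝ}
    (h : γ < sInf {γ | e < F γ}) : F γ ≤ e :=
  not_lt.mp fun hγ => (csInf_le hbdd hγ).not_gt h

lemma le_apply_sInf (hF : Monotone F) (hne : {γ | e < F γ}.Nonempty)
    (hcont : ContinuousWithinAt F (Ioi (sInf {γ | e < F γ})) (sInf {γ | e < F γ})) :
    e ≤ F (sInf {γ | e < F γ}) := by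
  refine ge_of_tendsto hcont (eventually_nhdsWithin_of_forall fun γ hγ => ?_)
  obtain ⟨s, hs, hsγ⟩ := exists_lt_of_csInf_lt hne hγ
  exact (hs.trans_le (hF hsγ.le)).le

end Quantile

section SublevelSets

variable {α : Type*} {g : α → ℝ≥0∞}

lemma monotone_setOf_le_ofReal : Monotone fun γ : ℝ => {x | g x ≤ ENNReal.ofReal γ} :=
  fun _ _ h _ hx => hx.trans (ofReal_le_ofReal h)

lemma biInter_gt_setOf_le_ofReal (a : ℝ) :
    ⋂ r > a, {x | g x ≤ ENNReal.ofReal r} = {x | g x ≤ ENNReal.ofReal a} := by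
  ext x
  simp only [mem_iInter, mem_ofPred_eq]
  refine ⟨fun h => not_lt.mp fun hlt => ?_, fun hx r hr => hx.trans (ofReal_le_ofReal hr.le)⟩
  obtain ⟨r, -, har, hrx⟩ := ENNReal.lt_iff_exists_real_btwn.mp hlt
  exact (h r ((ofReal_lt_ofReal_iff'.mp har).1)).not_gt hrx

lemma iUnion_setOf_le_ofReal_eq {q : ℝ} (hq : 0 < q) {u : ℕ → ℝ} (hu : ∀ n, u n < q)
    (hlim : Tendsto u atTop (𝓝 q)) :
    ⋃ n, {x | g x ≤ ENNReal.ofReal (u n)} = {x | g x < ENNReal.ofReal q} := by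
  ext x
  simp only [mem_iUnion, mem_ofPred_eq]
  refine ⟨fun ⟨n, hn⟩ => hn.trans_lt ((ofReal_lt_ofReal_iff hq).mpr (hu n)), fun hx => ?_⟩
  obtain ⟨r, -, hxr, hrq⟩ := ENNReal.lt_iff_exists_real_btwn.mp hx
  obtain ⟨n, hn⟩ := (hlim.eventually (lt_mem_nhds (ofReal_lt_ofReal_iff'.mp hrq).1)).exists
  exact ⟨n, hxr.le.trans (ofReal_le_ofReal hn.le)⟩

end SublevelSets

section DistributionFunction

variable {μ : Measure Ω} {g : Ω → ℝ≥0∞}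

lemma monotone_measure_le_ofReal : Monotone fun γ : ℝ => μ {x | g x ≤ ENNReal.ofReal γ} :=
  fun _ _ h => measure_mono (monotone_setOf_le_ofReal h)

lemma continuousWithinAt_measure_le_ofReal [IsFiniteMeasure μ] (hg : Measurable g) (a : ℝ) :
    ContinuousWithinAt (fun γ : ℝ => μ {x | g x ≤ ENNReal.ofReal γ}) (Ioi a) a := by
  have h := tendsto_measure_biInter_gt (μ := μ) (s := fun γ : ℝ => {x | g x ≤ ENNReal.ofReal γ})
    (fun _ _ => (measurableSet_le hg measurable_const).nullMeasurableSet)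
    (fun _ _ _ hij => monotone_setOf_le_ofReal hij) ⟨a + 1, by linarith, measure_ne_top _ _⟩
  rwa [biInter_gt_setOf_le_ofReal] at h

lemma measure_lt_ofReal_le {q : ℝ} (hq : 0 < q) {e : ℝ≥0∞}
    (h : ∀ γ < q, μ {x | g x ≤ ENNReal.ofReal γ} ≤ e) : μ {x | g x < ENNReal.ofReal q} ≤ e := by
  obtain ⟨u, hu_mono, hu, hlim⟩ := exists_seq_strictMono_tendsto q
  have hmono : Monotone fun n => {x | g x ≤ ENNReal.ofReal (u n)} :=
    fun _ _ hmn => monotone_setOf_le_ofReal (hu_mono.monotone hmn)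
  rw [← iUnion_setOf_le_ofReal_eq hq hu hlim, hmono.measure_iUnion]
  exact iSup_le fun n => h _ (hu n)

lemma exists_lt_measure_le_ofReal (hg : ∀ᵐ x ∂μ, g x < ∞) {e : ℝ≥0∞} (he : e < μ univ) :
    ∃ γ : ℝ, e < μ {x | g x ≤ ENNReal.ofReal γ} := by
  have hmono : Monotone fun n : ℕ => {x | g x ≤ ENNReal.ofReal n} :=
    fun _ _ hmn => monotone_setOf_le_ofReal (Nat.cast_le.mpr hmn)
  have hcover : μ univ ≤ μ (⋃ n : ℕ, {x | g x ≤ ENNReal.ofReal n}) := by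
    refine measure_mono_ae (hg.mono fun x hx _ => ?_)
    obtain ⟨n, hn⟩ := ENNReal.exists_nat_gt hx.ne
    exact mem_iUnion.mpr ⟨n, by simpa using hn.le⟩
  rw [hmono.measure_iUnion] at hcover
  obtain ⟨n, hn⟩ := lt_iSup_iff.mp (he.trans_le hcover)
  exact ⟨n, hn⟩

lemma exists_pos_measure_le_ofReal_lt [IsFiniteMeasure μ] (hg : Measurable g)
    (hg_pos : ∀ᵐ x ∂μ, 0 < g x) {e : ℝ≥0∞} (he : 0 < e) :
    ∃ γ > 0, μ {x | g x ≤ ENNReal.ofReal γ} < e := by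
  have h0 : μ {x | g x ≤ ENNReal.ofReal 0} = 0 := by
    rw [ofReal_zero]
    exact measure_eq_zero_iff_ae_notMem.mpr (hg_pos.mono fun x hx => hx.not_ge)
  have hev := (continuousWithinAt_measure_le_ofReal hg 0).eventually (gt_mem_nhds (h0 ▸ he))
  obtain ⟨γ, hγ, hγ0⟩ := (hev.and self_mem_nhdsWithin).exists
  exact ⟨γ, hγ0, hγ⟩

end DistributionFunction

section LikelihoodRatioQuantile

variable {Q W : Measure Ω} [IsProbabilityMeasure W] {ε : ℝ}

lemma lrUpperQR_set_nonempty (hWQ : W ≪ Q) (hε : ε < 1) :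
    {γ : ℝ | ENNReal.ofReal ε < W {x | W.rnDeriv Q x ≤ ENNReal.ofReal γ}}.Nonempty :=
  exists_lt_measure_le_ofReal (hWQ.ae_le (W.rnDeriv_lt_top Q))
    (by simpa using ofReal_lt_one.mpr hε)

lemma exists_pos_mem_lowerBounds_lrUpperQR_set [W.HaveLebesgueDecomposition Q] (hWQ : W ≪ Q)
    (hε : 0 < ε) : ∃ γ₀ > 0,
      γ₀ ∈ lowerBounds {γ : ℝ | ENNReal.ofReal ε < W {x | W.rnDeriv Q x ≤ ENNReal.ofReal γ}} := by
  obtain ⟨γ₀, hγ₀, hF⟩ := exists_pos_measure_le_ofReal_lt (W.measurable_rnDeriv Q)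
    (Measure.rnDeriv_pos hWQ) (ofReal_pos.mpr hε)
  exact ⟨γ₀, hγ₀, mem_lowerBounds_of_apply_le monotone_measure_le_ofReal hF.le⟩

lemma lrUpperQR_pos [W.HaveLebesgueDecomposition Q] (hWQ : W ≪ Q) (hε₀ : 0 < ε) (hε₁ : ε < 1) :
    0 < lrUpperQR W Q ε := by
  obtain ⟨γ₀, hγ₀, hlb⟩ := exists_pos_mem_lowerBounds_lrUpperQR_set hWQ hε₀
  exact hγ₀.trans_le (le_csInf (lrUpperQR_set_nonempty hWQ hε₁) hlb)

lemma le_measure_rnDeriv_le_lrUpperQR (hWQ : W ≪ Q) (hε : ε < 1) :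
    ENNReal.ofReal ε ≤ W {x | W.rnDeriv Q x ≤ ENNReal.ofReal (lrUpperQR W Q ε)} :=
  le_apply_sInf monotone_measure_le_ofReal (lrUpperQR_set_nonempty hWQ hε)
    (continuousWithinAt_measure_le_ofReal (W.measurable_rnDeriv Q) _)

lemma measure_rnDeriv_lt_lrUpperQR_le [W.HaveLebesgueDecomposition Q] (hWQ : W ≪ Q)
    (hε₀ : 0 < ε) (hε₁ : ε < 1) :
    W {x | W.rnDeriv Q x < ENNReal.ofReal (lrUpperQR W Q ε)} ≤ ENNReal.ofReal ε := by
  obtain ⟨γ₀, -, hlb⟩ := exists_pos_mem_lowerBounds_lrUpperQR_set hWQ hε₀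
  exact measure_lt_ofReal_le (lrUpperQR_pos hWQ hε₀ hε₁) fun γ hγ =>
    apply_le_of_lt_sInf ⟨γ₀, hlb⟩ hγ

end LikelihoodRatioQuantile

section RandomizedTests

variable {μ : Measure Ω} {T : Ω → ℝ}

lemma lintegral_ofReal_one_sub [IsFiniteMeasure μ] (hT : Measurable T)
    (hT01 : ∀ x, T x ∈ Icc (0 : ℝ) 1) :
    ∫⁻ x, ENNReal.ofReal (1 - T x) ∂μ = μ univ - ∫⁻ x, ENNReal.ofReal (T x) ∂μ := by
  have hle : ∀ x, ENNReal.ofReal (T x) ≤ 1 := fun x => ofReal_le_one.mpr (hT01 x).2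
  have hfin : ∫⁻ x, ENNReal.ofReal (T x) ∂μ ≠ ∞ :=
    ne_top_of_le_ne_top (measure_ne_top μ univ) (by simpa using lintegral_mono hle)
  rw [← lintegral_one, ← lintegral_sub hT.ennreal_ofReal hfin (ae_of_all _ hle)]
  congr with x
  rw [ofReal_sub _ (hT01 x).1, ofReal_one]

lemma exists_test_lintegral_eq [IsFiniteMeasure μ] {L D : Set Ω} (hL : MeasurableSet L)
    (hD : MeasurableSet D) (hLD : Disjoint L D) {a : ℝ≥0∞} (haL : μ L ≤ a)
    (haD : a ≤ μ L + μ D) :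
    ∃ T : Ω → ℝ, Measurable T ∧ (∀ x, T x ∈ Icc (0 : ℝ) 1) ∧ (∀ x ∈ L, T x = 1) ∧
      ∫⁻ x, ENNReal.ofReal (T x) ∂μ = a := by
  set t := (a - μ L) / μ D
  have ht : t ≤ 1 := ENNReal.div_le_of_le_mul (by rwa [one_mul, tsub_le_iff_left])
  have htD : t * μ D = a - μ L := by
    rcases eq_or_ne (μ D) 0 with h0 | h0
    · rw [h0, mul_zero, eq_comm, tsub_eq_zero_iff_le]
      simpa [h0] using haD
    · exact ENNReal.div_mul_cancel h0 (measure_ne_top μ D)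
  have ht01 : t.toReal ∈ Icc (0 : ℝ) 1 := ⟨toReal_nonneg, toReal_le_of_le_ofReal zero_le_one
    (by rwa [ofReal_one])⟩
  have hofReal : ∀ x,
      ENNReal.ofReal (L.indicator (fun _ => 1) x + D.indicator (fun _ => t.toReal) x) =
        L.indicator (fun _ => 1) x + D.indicator (fun _ => t) x := fun x => by
    by_cases hxL : x ∈ L
    · simp [hxL, disjoint_left.mp hLD hxL]
    · by_cases hxD : x ∈ D
      · simp [hxL, hxD, ofReal_toReal (ht.trans_lt one_lt_top).ne]
      · simp [hxL, hxD]
  refine ⟨fun x => L.indicator (fun _ => 1) x + D.indicator (fun _ => t.toReal) x,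
    (measurable_const.indicator hL).add (measurable_const.indicator hD), fun x => ?_,
    fun x hx => by simp [hx, disjoint_left.mp hLD hx], ?_⟩
  · by_cases hxL : x ∈ L
    · simp [hxL, disjoint_left.mp hLD hxL]
    · by_cases hxD : x ∈ D
      · simpa [hxL, hxD] using ht01
      · simp [hxL, hxD]
  · simp_rw [hofReal]
    rw [lintegral_add_left (measurable_const.indicator hL), lintegral_indicator_const hL,
      lintegral_indicator_const hD, one_mul, htD, add_tsub_cancel_of_le haL]

end RandomizedTests

section RadonNikodym

variable {μ ν : Measure Ω} [μ.HaveLebesgueDecomposition ν] {h : Ω → ℝ≥0∞}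

lemma lintegral_le_inv_mul_lintegral_of_rnDeriv_lt (hμν : μ ≪ ν) (hh : Measurable h)
    {c : ℝ≥0∞} (hc₀ : c ≠ 0) (hc : c ≠ ∞) (hzero : ∀ x, μ.rnDeriv ν x < c → h x = 0) :
    ∫⁻ x, h x ∂ν ≤ c⁻¹ * ∫⁻ x, h x ∂μ := by
  have hpt : ∀ x, h x ≤ c⁻¹ * (μ.rnDeriv ν x * h x) := fun x => by
    rcases lt_or_ge (μ.rnDeriv ν x) c with hx | hx
    · simp [hzero x hx]
    · calc h x = c⁻¹ * c * h x := by rw [ENNReal.inv_mul_cancel hc₀ hc, one_mul]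
        _ ≤ c⁻¹ * (μ.rnDeriv ν x * h x) := by rw [mul_assoc]; gcongr
  calc ∫⁻ x, h x ∂ν ≤ ∫⁻ x, c⁻¹ * (μ.rnDeriv ν x * h x) ∂ν := lintegral_mono hpt
    _ = c⁻¹ * ∫⁻ x, h x ∂μ := by
      rw [lintegral_const_mul (f := fun x => μ.rnDeriv ν x * h x) _
          ((μ.measurable_rnDeriv ν).mul hh),
        lintegral_rnDeriv_mul hμν hh.aemeasurable]

lemma setLIntegral_le_mul_setLIntegral_of_rnDeriv_le (hμν : μ ≪ ν) (hh : Measurable h)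
    {s : Set Ω} (hs : MeasurableSet s) {c : ℝ≥0∞} (hsc : ∀ x ∈ s, μ.rnDeriv ν x ≤ c) :
    ∫⁻ x in s, h x ∂μ ≤ c * ∫⁻ x in s, h x ∂ν := by
  rw [← setLIntegral_rnDeriv_mul hμν hh.aemeasurable hs, ← lintegral_const_mul _ hh]
  exact setLIntegral_mono' hs fun x hx => mul_le_mul_left (hsc x hx) _

end RadonNikodym

section NeymanPearson

variable {Q W : Measure Ω} {ε : ℝ}

lemma betaNP_le {T : Ω → ℝ} (hT : Measurable T) (hT01 : ∀ x, T x ∈ Icc (0 : ℝ) 1)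
    (hTε : ∫⁻ x, ENNReal.ofReal (T x) ∂W ≤ ENNReal.ofReal ε) :
    betaNP Q W ε ≤ ∫⁻ x, ENNReal.ofReal (1 - T x) ∂Q :=
  iInf_le_of_le T <| iInf_le_of_le hT <| iInf_le_of_le hT01 <| iInf_le _ hTε

lemma le_betaNP {b : ℝ≥0∞} (h : ∀ T : Ω → ℝ, Measurable T → (∀ x, T x ∈ Icc (0 : ℝ) 1) →
    ∫⁻ x, ENNReal.ofReal (T x) ∂W ≤ ENNReal.ofReal ε → b ≤ ∫⁻ x, ENNReal.ofReal (1 - T x) ∂Q) :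
    b ≤ betaNP Q W ε :=
  le_iInf fun T => le_iInf fun hT => le_iInf fun hT01 => le_iInf fun hTε => h T hT hT01 hTε

variable [W.HaveLebesgueDecomposition Q]

lemma betaNP_le_of_measure_rnDeriv_lt_le [IsProbabilityMeasure W] (hWQ : W ≪ Q) {c : ℝ≥0∞}
    (hc₀ : c ≠ 0) (hc : c ≠ ∞) (hlt : W {x | W.rnDeriv Q x < c} ≤ ENNReal.ofReal ε)
    (hle : ENNReal.ofReal ε ≤ W {x | W.rnDeriv Q x ≤ c}) :
    betaNP Q W ε ≤ (1 - ENNReal.ofReal ε) / c := by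
  have hf := W.measurable_rnDeriv Q
  have hdisj : Disjoint {x | W.rnDeriv Q x < c} {x | W.rnDeriv Q x = c} :=
    disjoint_left.mpr fun _ hlt heq => hlt.ne heq
  have hsplit : W {x | W.rnDeriv Q x ≤ c} =
      W {x | W.rnDeriv Q x < c} + W {x | W.rnDeriv Q x = c} := by
    rw [← measure_union hdisj (hf (measurableSet_singleton c))]
    congr with x
    exact le_iff_lt_or_eq
  obtain ⟨T, hT, hT01, hT1, hTW⟩ := exists_test_lintegral_eq (measurableSet_lt hf measurable_const)
    (hf (measurableSet_singleton c)) hdisj hlt (hsplit ▸ hle)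
  calc betaNP Q W ε ≤ ∫⁻ x, ENNReal.ofReal (1 - T x) ∂Q := betaNP_le hT hT01 hTW.le
    _ ≤ c⁻¹ * ∫⁻ x, ENNReal.ofReal (1 - T x) ∂W :=
      lintegral_le_inv_mul_lintegral_of_rnDeriv_lt hWQ (measurable_const.sub hT).ennreal_ofReal
        hc₀ hc fun x hx => by simp [hT1 x hx]
    _ = (1 - ENNReal.ofReal ε) / c := by
      rw [lintegral_ofReal_one_sub hT hT01, hTW, measure_univ, div_eq_mul_inv, mul_comm]

lemma measure_rnDeriv_le_sub_div_le_betaNP [IsFiniteMeasure W] (hWQ : W ≪ Q) (c : ℝ≥0∞) :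
    (W {x | W.rnDeriv Q x ≤ c} - ENNReal.ofReal ε) / c ≤ betaNP Q W ε := by
  refine le_betaNP fun T hT hT01 hTε => ENNReal.div_le_of_le_mul' ?_
  set A := {x | W.rnDeriv Q x ≤ c}
  have hA : MeasurableSet A := measurableSet_le (W.measurable_rnDeriv Q) measurable_const
  calc W A - ENNReal.ofReal ε ≤ W A - ∫⁻ x in A, ENNReal.ofReal (T x) ∂W :=
        tsub_le_tsub_left ((setLIntegral_le_lintegral _ _).trans hTε) _
    _ = ∫⁻ x in A, ENNReal.ofReal (1 - T x) ∂W := by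
      rw [lintegral_ofReal_one_sub hT hT01, Measure.restrict_apply_univ]
    _ ≤ c * ∫⁻ x in A, ENNReal.ofReal (1 - T x) ∂Q :=
      setLIntegral_le_mul_setLIntegral_of_rnDeriv_le hWQ (measurable_const.sub hT).ennreal_ofReal
        hA fun _ hx => hx
    _ ≤ c * ∫⁻ x, ENNReal.ofReal (1 - T x) ∂Q := mul_le_mul_right (setLIntegral_le_lintegral _ _) c

end NeymanPearson

/-- For a probability measure `W` and a σ-finite `Q` with `W ≪ Q`, for every
`ε ∈ (0,1)`: `(1 − ε)/F⁺(ε) ≥ β(ε)`, and for every `δ ∈ (0, 1 − ε)`,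
`β(ε) ≥ δ/F⁺(ε + δ)`. -/
theorem betaNP_quantile_bounds (Q W : Measure Ω)
    [IsProbabilityMeasure W] [SigmaFinite Q] (hWQ : W ≪ Q) :
    ∀ ε ∈ Set.Ioo (0 : ℝ) 1,
      betaNP Q W ε ≤ ENNReal.ofReal ((1 - ε) / lrUpperQR W Q ε) ∧
      ∀ δ ∈ Set.Ioo (0 : ℝ) (1 - ε),
        ENNReal.ofReal (δ / lrUpperQR W Q (ε + δ)) ≤ betaNP Q W ε := by
  rintro ε ⟨hε₀, hε₁⟩
  refine ⟨?_, fun δ ⟨hδ₀, hδ₁⟩ => ?_⟩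
  · have hq := lrUpperQR_pos hWQ hε₀ hε₁
    calc betaNP Q W ε ≤ (1 - ENNReal.ofReal ε) / ENNReal.ofReal (lrUpperQR W Q ε) :=
          betaNP_le_of_measure_rnDeriv_lt_le hWQ (ofReal_pos.mpr hq).ne' ofReal_ne_top
            (measure_rnDeriv_lt_lrUpperQR_le hWQ hε₀ hε₁) (le_measure_rnDeriv_le_lrUpperQR hWQ hε₁)
      _ = ENNReal.ofReal ((1 - ε) / lrUpperQR W Q ε) := by
          rw [ofReal_div_of_pos hq, ofReal_sub _ hε₀.le, ofReal_one]
  · have hεδ₁ : ε + δ < 1 := by linarith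
    have hq := lrUpperQR_pos hWQ (by linarith) hεδ₁
    have hδ : ENNReal.ofReal δ ≤
        W {x | W.rnDeriv Q x ≤ ENNReal.ofReal (lrUpperQR W Q (ε + δ))} - ENNReal.ofReal ε :=
      ENNReal.le_sub_of_add_le_left ofReal_ne_top <|
        (ofReal_add hε₀.le hδ₀.le).symm.trans_le (le_measure_rnDeriv_le_lrUpperQR hWQ hεδ₁)
    calc ENNReal.ofReal (δ / lrUpperQR W Q (ε + δ))
        = ENNReal.ofReal δ / ENNReal.ofReal (lrUpperQR W Q (ε + δ)) := ofReal_div_of_pos hq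
      _ ≤ _ := by gcongr
      _ ≤ betaNP Q W ε := measure_rnDeriv_le_sub_div_le_betaNP hWQ _
end
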